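/- arXiv:1411.1749 — 9 statements merged into one kernel-verified Lean document; each statement's English description precedes it below -/
import Mathlib

section
/- Let n ≥ 3 and let G be a simple graph on n vertices. For t ∈ ℕ set a_t = t·(n−t−1) and b_t = t·(n−2), and let t_max be the largest natural number t with t·(t+1) < n−2 (which exists since n ≥ 3). If f(G) < a_{t_max+1} = (t_max+1)·(n−t_max−2), then there exists a unique natural number t ≤ t_max such that a_t ≤ f(G) ≤ b_t. -/
/-!
Switching `G` at a vertex set `S` (complementing the pairs with exactly one end in `S`) changes
the number of edges inside every triple by an even amount, so it preserves `fCount`. Let `H` have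
the fewest edges in the switching class of `G` and let `t` be its number of edges.
* Every frustrated triple contains an edge, and an edge lies in `n - 2` triples: `f ≤ t (n - 2)`.
* An edge `uv` with a vertex adjacent to neither end is a frustrated triple with exactly one edge,
  and `deg u + deg v ≤ t + 1`: `f ≥ t (n - t - 1)`.
* Switching `H` at the neighbourhood of `w` isolates `w`, and its edges then span frustrated
  triples through `w`; by minimality every vertex lies in at least `t` frustrated triples, so
  `3 f ≥ n t`.
For `t ≤ tmax` the intervals `[t (n - t - 1), t (n - 2)]` are pairwise disjoint, and `t > tmax` is
impossible: by concavity of `t (n - t - 1)` if `t ≤ n - tmax - 2`, and by `3 f ≥ n t` otherwise.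
-/

open Finset

open Classical in
/-- A triple of distinct vertices is *frustrated* if it induces an odd number of edges. -/
noncomputable def frustrated {V : Type*} (G : SimpleGraph V) (u v w : V) : Prop :=
  Odd ((if G.Adj u v then 1 else 0) + (if G.Adj u w then 1 else 0) +
       (if G.Adj v w then 1 else 0) : ℕ)

/-- The number of frustrated triangles of `G`: the number of 3-element vertex subsets
inducing an odd number of edges. -/
noncomputable def fCount {V : Type*} [Fintype V] [DecidableEq V] (G : SimpleGraph V) : ℕ := by
  classical
  exact ((Finset.univ.powersetCard 3).filter
    (fun s : Finset V => ∃ u v w : V, u ≠ v ∧ u ≠ w ∧ v ≠ w ∧ s = {u, v, w} ∧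
      frustrated G u v w)).card

theorem Finset.card_powersetCard_filter_superset_le {α : Type*} [Fintype α] [DecidableEq α]
    (t : Finset α) (k : ℕ) :
    #{s ∈ powersetCard k univ | t ⊆ s} ≤ (Fintype.card α - #t).choose (k - #t) := by
  calc #{s ∈ powersetCard k univ | t ⊆ s}
      ≤ #(powersetCard (k - #t) (univ \ t)) := by
        refine card_le_card_of_injOn (· \ t) (fun s hs => ?_) (fun s₁ hs₁ s₂ hs₂ h => ?_)
        · rw [mem_coe, mem_filter, mem_powersetCard_univ] at hs
          rw [mem_coe, mem_powersetCard, card_sdiff_of_subset hs.2, hs.1]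
          exact ⟨sdiff_subset_sdiff (subset_univ s) subset_rfl, rfl⟩
        · rw [mem_coe, mem_filter] at hs₁ hs₂
          rw [← sdiff_union_of_subset hs₁.2, ← sdiff_union_of_subset hs₂.2]
          exact congrArg (· ∪ t) h
    _ = (Fintype.card α - #t).choose (k - #t) := by
        rw [card_powersetCard, card_sdiff_of_subset (subset_univ t), card_univ]

namespace SimpleGraph

variable {V : Type*} (G : SimpleGraph V)

/-- Seidel switching. The condition `G.Adj a b ↔ (a ∈ S ↔ b ∈ S)` fails for `a = b`, so no loops
appear. -/
def switch (S : Set V) : SimpleGraph V where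
  Adj a b := G.Adj a b ↔ (a ∈ S ↔ b ∈ S)
  symm := ⟨fun a b h => by rwa [G.adj_comm, Iff.comm (a := b ∈ S)]⟩
  loopless := ⟨fun _ h => G.irrefl (h.2 Iff.rfl)⟩

@[simp]
theorem switch_adj {S : Set V} {a b : V} :
    (G.switch S).Adj a b ↔ (G.Adj a b ↔ (a ∈ S ↔ b ∈ S)) := Iff.rfl

theorem frustrated_switch (S : Set V) (u v w : V) :
    frustrated (G.switch S) u v w ↔ frustrated G u v w := by
  by_cases G.Adj u v <;> by_cases G.Adj u w <;> by_cases G.Adj v w <;>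
    by_cases u ∈ S <;> by_cases v ∈ S <;> by_cases w ∈ S <;>
    simp_all [frustrated, Nat.odd_iff]

def IsSwitchingMinimal : Prop :=
  ∀ S : Set V, G.edgeSet.ncard ≤ (G.switch S).edgeSet.ncard

variable {G}

theorem notMem_of_forall_not_adj {e : Sym2 V} {w : V} (he : e ∈ G.edgeSet)
    (hw : ∀ x ∈ e, ¬G.Adj x w) : w ∉ e := by
  intro hwe
  obtain ⟨y, rfl⟩ := Sym2.mem_iff_exists.1 hwe
  exact hw y (Sym2.mem_mk_right w y) (G.adj_symm he)

theorem eq_of_adj_of_mem_insert_toFinset [DecidableEq V] {e : Sym2 V} {w x y : V}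
    (he : e ∈ G.edgeSet) (hw : ∀ z ∈ e, ¬G.Adj z w) (hx : x ∈ insert w e.toFinset)
    (hy : y ∈ insert w e.toFinset) (hxy : G.Adj x y) : s(x, y) = e := by
  induction e using Sym2.ind with
  | h a b =>
    simp only [Sym2.toFinset_mk_eq, mem_insert, mem_singleton] at hx hy
    simp only [Sym2.mem_iff, forall_eq_or_imp, forall_eq] at hw
    rcases hx with rfl | rfl | rfl <;> rcases hy with rfl | rfl | rfl <;>
      simp_all [G.adj_comm, Sym2.eq_swap]

section Fintype

variable [Fintype V] [DecidableEq V]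

variable (G) in
open Classical in
noncomputable def frustratedSets : Finset (Finset V) :=
  (univ.powersetCard 3).filter
    (fun s => ∃ u v w : V, u ≠ v ∧ u ≠ w ∧ v ≠ w ∧ s = {u, v, w} ∧ frustrated G u v w)

variable (G) in
theorem fCount_eq_card_frustratedSets : fCount G = #G.frustratedSets := rfl

theorem mem_frustratedSets {s : Finset V} : s ∈ G.frustratedSets ↔
    #s = 3 ∧ ∃ u v w : V, u ≠ v ∧ u ≠ w ∧ v ≠ w ∧ s = {u, v, w} ∧ frustrated G u v w := by
  simp [frustratedSets]

theorem insert_mem_frustratedSets {u v w : V} (huv : u ≠ v) (huw : u ≠ w) (hvw : v ≠ w)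
    (h : frustrated G u v w) : {u, v, w} ∈ G.frustratedSets :=
  mem_frustratedSets.2 ⟨card_eq_three.2 ⟨u, v, w, huv, huw, hvw, rfl⟩, u, v, w, huv, huw, hvw,
    rfl, h⟩

theorem insert_mem_frustratedSets_of_adj {u v w : V} (h : G.Adj u v) (hu : ¬G.Adj u w)
    (hv : ¬G.Adj v w) : {w, u, v} ∈ G.frustratedSets := by
  have hwu : w ≠ u := by rintro rfl; exact hv h.symm
  have hwv : w ≠ v := by rintro rfl; exact hu h
  refine insert_mem_frustratedSets hwu hwv h.ne ?_
  simp [frustrated, G.adj_comm w, hu, hv, h]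

theorem exists_toFinset_subset_of_mem_frustratedSets {s : Finset V}
    (hs : s ∈ G.frustratedSets) : ∃ e ∈ G.edgeSet, e.toFinset ⊆ s := by
  obtain ⟨-, u, v, w, -, -, -, rfl, h⟩ := mem_frustratedSets.1 hs
  by_cases huv : G.Adj u v
  · exact ⟨s(u, v), huv, by simp [Sym2.toFinset_mk_eq]⟩
  by_cases huw : G.Adj u w
  · exact ⟨s(u, w), huw, by simp [Sym2.toFinset_mk_eq]⟩
  by_cases hvw : G.Adj v w
  · exact ⟨s(v, w), hvw, by simp [Sym2.toFinset_mk_eq]⟩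
  simp [frustrated, huv, huw, hvw] at h

variable (G)

theorem frustratedSets_switch (S : Set V) :
    (G.switch S).frustratedSets = G.frustratedSets := by
  ext s
  simp only [mem_frustratedSets, frustrated_switch]

theorem fCount_switch (S : Set V) : fCount (G.switch S) = fCount G := by
  rw [fCount_eq_card_frustratedSets, fCount_eq_card_frustratedSets, frustratedSets_switch]

theorem fCount_le_ncard_edgeSet_mul : fCount G ≤ G.edgeSet.ncard * (Fintype.card V - 2) := by
  classical
  have hcover : G.frustratedSets ⊆
      G.edgeFinset.biUnion fun e => {s ∈ powersetCard 3 univ | e.toFinset ⊆ s} := by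
    intro s hs
    obtain ⟨e, he, hes⟩ := G.exists_toFinset_subset_of_mem_frustratedSets hs
    exact mem_biUnion.2 ⟨e, mem_edgeFinset.2 he,
      mem_filter.2 ⟨mem_powersetCard_univ.2 (mem_frustratedSets.1 hs).1, hes⟩⟩
  have hfiber : ∀ e ∈ G.edgeFinset,
      #{s ∈ powersetCard 3 univ | e.toFinset ⊆ s} ≤ Fintype.card V - 2 := fun e he => by
    simpa [Sym2.card_toFinset_of_not_isDiag e (G.not_isDiag_of_mem_edgeSet (mem_edgeFinset.1 he))]
      using card_powersetCard_filter_superset_le e.toFinset 3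
  rw [fCount_eq_card_frustratedSets, ← coe_edgeFinset, Set.ncard_coe_finset]
  calc #G.frustratedSets
      ≤ ∑ e ∈ G.edgeFinset, #{s ∈ powersetCard 3 univ | e.toFinset ⊆ s} :=
        (card_le_card hcover).trans card_biUnion_le
    _ ≤ #G.edgeFinset * (Fintype.card V - 2) := by
        simpa only [sum_const, smul_eq_mul] using sum_le_sum hfiber

theorem degree_add_degree_le [DecidableRel G.Adj] {u v : V} (h : G.Adj u v) :
    G.degree u + G.degree v ≤ #G.edgeFinset + 1 := by
  have hinter : G.incidenceFinset u ∩ G.incidenceFinset v = {s(u, v)} := by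
    rw [← coe_inj, coe_inter, coe_incidenceFinset, coe_incidenceFinset,
      G.incidenceSet_inter_incidenceSet_of_adj h, coe_singleton]
  rw [← card_incidenceFinset_eq_degree, ← card_incidenceFinset_eq_degree,
    ← card_union_add_card_inter, hinter, card_singleton]
  gcongr
  exact union_subset (G.incidenceFinset_subset u) (G.incidenceFinset_subset v)

theorem card_sub_card_edgeFinset_sub_one_le [DecidableRel G.Adj] {u v : V} (h : G.Adj u v) :
    Fintype.card V - #G.edgeFinset - 1 ≤ #{w | ¬G.Adj u w ∧ ¬G.Adj v w} := by
  have hcompl : ({w | ¬G.Adj u w ∧ ¬G.Adj v w} : Finset V) =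
      (G.neighborFinset u ∪ G.neighborFinset v)ᶜ := by
    ext w
    simp
  have hunion := card_union_le (G.neighborFinset u) (G.neighborFinset v)
  rw [card_neighborFinset_eq_degree, card_neighborFinset_eq_degree] at hunion
  rw [hcompl, card_compl]
  have := G.degree_add_degree_le h
  omega

theorem ncard_edgeSet_mul_le_fCount :
    G.edgeSet.ncard * (Fintype.card V - G.edgeSet.ncard - 1) ≤ fCount G := by
  classical
  rw [fCount_eq_card_frustratedSets, ← coe_edgeFinset, Set.ncard_coe_finset]
  let far : Sym2 V → Finset V := fun e => {w | ∀ x ∈ e, ¬G.Adj x w}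
  have hfar : ∀ e ∈ G.edgeFinset, Fintype.card V - #G.edgeFinset - 1 ≤ #(far e) := by
    intro e he
    induction e using Sym2.ind with
    | h u v => simpa [far] using G.card_sub_card_edgeFinset_sub_one_le (mem_edgeFinset.1 he)
  have hmaps : ∀ p ∈ G.edgeFinset.sigma far, insert p.2 p.1.toFinset ∈ G.frustratedSets := by
    rintro ⟨e, w⟩ hp
    simp only [mem_sigma, mem_edgeFinset, far, mem_filter_univ] at hp
    induction e using Sym2.ind with
    | h u v =>
      simp only [Sym2.mem_iff, forall_eq_or_imp, forall_eq] at hp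
      rw [Sym2.toFinset_mk_eq]
      exact insert_mem_frustratedSets_of_adj hp.1 hp.2.1 hp.2.2
  -- a triple built this way contains exactly one edge, which recovers the pair
  have hinj : Set.InjOn (fun p : Σ _ : Sym2 V, V => insert p.2 p.1.toFinset)
      (G.edgeFinset.sigma far) := by
    rintro ⟨e, w⟩ hp ⟨e', w'⟩ hq h
    simp only [coe_sigma, Set.mem_sigma_iff, mem_coe, mem_edgeFinset, far, mem_filter_univ]
      at hp hq h
    have hee' : e' = e := by
      induction e' using Sym2.ind with
      | h x y =>
        refine eq_of_adj_of_mem_insert_toFinset hp.1 hp.2 ?_ ?_ hq.1 <;>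
          (rw [h]; simp [Sym2.toFinset_mk_eq])
    rw [hee'] at hq h
    have hw' : w' ∈ insert w e.toFinset := by rw [h]; exact mem_insert_self w' _
    rw [mem_insert, Sym2.mem_toFinset] at hw'
    rw [hw'.resolve_right (notMem_of_forall_not_adj hq.1 hq.2), hee']
  calc #G.edgeFinset * (Fintype.card V - #G.edgeFinset - 1)
      ≤ ∑ e ∈ G.edgeFinset, #(far e) := by
        simpa only [sum_const, smul_eq_mul] using sum_le_sum hfar
    _ = #(G.edgeFinset.sigma far) := (card_sigma _ _).symm
    _ ≤ #G.frustratedSets := card_le_card_of_injOn _ hmaps hinj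

theorem ncard_edgeSet_switch_neighborSet_le (w : V) :
    (G.switch (G.neighborSet w)).edgeSet.ncard ≤ #{s ∈ G.frustratedSets | w ∈ s} := by
  classical
  set H := G.switch (G.neighborSet w)
  have hiso : ∀ x, ¬H.Adj x w := fun x hxw => by simp [H, G.adj_comm] at hxw
  have hw : ∀ e ∈ H.edgeSet, w ∉ e := fun e he =>
    notMem_of_forall_not_adj he fun x _ => hiso x
  rw [← coe_edgeFinset, Set.ncard_coe_finset, ← G.frustratedSets_switch (G.neighborSet w)]
  refine card_le_card_of_injOn (fun e => insert w e.toFinset) (fun e he => ?_) ?_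
  · rw [mem_coe, mem_edgeFinset] at he
    refine mem_filter.2 ⟨?_, mem_insert_self w _⟩
    induction e using Sym2.ind with
    | h u v =>
      simp only [Sym2.toFinset_mk_eq]
      exact insert_mem_frustratedSets_of_adj he (hiso u) (hiso v)
  · intro e he e' he' h
    rw [mem_coe, mem_edgeFinset] at he he'
    have hfin : e.toFinset = e'.toFinset := by
      simpa only [erase_insert (mt Sym2.mem_toFinset.1 (hw e he)),
        erase_insert (mt Sym2.mem_toFinset.1 (hw e' he'))] using congrArg (·.erase w) h
    induction e using Sym2.ind with
    | h a b =>
      refine Sym2.eq_of_ne_mem (H.ne_of_adj he) (Sym2.mem_mk_left a b) (Sym2.mem_mk_right a b)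
        ?_ ?_ <;> rw [← Sym2.mem_toFinset, ← hfin, Sym2.toFinset_mk_eq] <;> simp

theorem IsSwitchingMinimal.card_mul_ncard_edgeSet_le (hG : G.IsSwitchingMinimal) :
    Fintype.card V * G.edgeSet.ncard ≤ 3 * fCount G := by
  calc Fintype.card V * G.edgeSet.ncard ≤ ∑ s ∈ G.frustratedSets, #s :=
        le_sum_card fun w => (hG _).trans (G.ncard_edgeSet_switch_neighborSet_le w)
    _ = 3 * fCount G := by
        rw [sum_congr rfl fun s hs => (mem_frustratedSets.1 hs).1, sum_const, smul_eq_mul,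
          mul_comm, fCount_eq_card_frustratedSets]

theorem exists_isSwitchingMinimal_fCount_eq :
    ∃ H : SimpleGraph V, H.IsSwitchingMinimal ∧ fCount H = fCount G := by
  induction hm : G.edgeSet.ncard using Nat.strong_induction_on generalizing G with
  | _ m ih =>
    by_cases hG : G.IsSwitchingMinimal
    · exact ⟨G, hG, rfl⟩
    · obtain ⟨S, hS⟩ : ∃ S, (G.switch S).edgeSet.ncard < m := by
        simpa [IsSwitchingMinimal, hm] using hG
      obtain ⟨H, hH, hf⟩ := ih _ hS (G.switch S) rfl
      exact ⟨H, hH, hf.trans (G.fCount_switch S)⟩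

theorem exists_fCount_bounds : ∃ t, t * (Fintype.card V - t - 1) ≤ fCount G ∧
    fCount G ≤ t * (Fintype.card V - 2) ∧ Fintype.card V * t ≤ 3 * fCount G := by
  obtain ⟨H, hH, hf⟩ := G.exists_isSwitchingMinimal_fCount_eq
  exact ⟨H.edgeSet.ncard, hf ▸ H.ncard_edgeSet_mul_le_fCount, hf ▸ H.fCount_le_ncard_edgeSet_mul,
    hf ▸ hH.card_mul_ncard_edgeSet_le⟩

end Fintype

end SimpleGraph

theorem le_of_mul_sub_sub_one_le_mul_sub_two {n s t : ℕ} (ht : t * (t + 1) < n - 2)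
    (h : t * (n - t - 1) ≤ s * (n - 2)) : t ≤ s := by
  by_contra! hst
  have ht' : t ≤ t * (t + 1) := Nat.le_mul_of_pos_right t (by omega)
  rw [Nat.sub_sub] at h
  zify [show 2 ≤ n by omega, show t + 1 ≤ n by omega] at ht h
  have hs : (s : ℤ) ≤ t - 1 := by omega
  nlinarith

theorem mul_sub_sub_one_le_of_le {n k t : ℕ} (hkt : k ≤ t) (htn : t + k + 1 ≤ n) :
    k * (n - k - 1) ≤ t * (n - t - 1) := by
  rw [Nat.sub_sub, Nat.sub_sub]
  zify [show k + 1 ≤ n by omega, show t + 1 ≤ n by omega]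
  nlinarith [mul_nonneg (show (0:ℤ) ≤ t - k by omega) (show (0:ℤ) ≤ n - t - k - 1 by omega)]

theorem three_mul_mul_sub_le {n m : ℕ} (hm : m * (m + 1) < n - 2) :
    3 * ((m + 1) * (n - m - 2)) ≤ n * (n - m - 1) := by
  have hm' : m ≤ m * (m + 1) := Nat.le_mul_of_pos_right m (by omega)
  rw [Nat.sub_sub, Nat.sub_sub]
  zify [show m + 2 ≤ n by omega, show m + 1 ≤ n by omega, show 2 ≤ n by omega] at hm ⊢
  -- with `k = m + 1`: `n (n - k) - 3 k (n - k - 1) = (n - k) (n - 3 k) + 3 k`,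
  -- and `n ≥ 3 k` once `m ≥ 2`
  rcases Nat.lt_or_ge m 2 with h | h
  · interval_cases m <;> push_cast at hm ⊢
    · nlinarith [sq_nonneg ((n : ℤ) - 2)]
    · nlinarith [sq_nonneg ((n : ℤ) - 4)]
  · have h3 : 3 * ((m : ℤ) + 1) ≤ n := by nlinarith
    nlinarith [mul_nonneg (show (0 : ℤ) ≤ n - (m + 1) by omega) (sub_nonneg.2 h3)]

theorem le_of_lt_succ_mul_sub_sub_two {n m t f : ℕ} (hm : m * (m + 1) < n - 2)
    (hf : f < (m + 1) * (n - m - 2)) (hlo : t * (n - t - 1) ≤ f) (hdeg : n * t ≤ 3 * f) :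
    t ≤ m := by
  by_contra! hmt
  rcases le_or_gt (t + (m + 1) + 1) n with hsmall | hlarge
  · have := mul_sub_sub_one_le_of_le (show m + 1 ≤ t by omega) hsmall
    rw [show n - (m + 1) - 1 = n - m - 2 by omega] at this
    omega
  · have h1 := three_mul_mul_sub_le hm
    have h2 : n * (n - m - 1) ≤ n * t := Nat.mul_le_mul_left n (by omega)
    omega

theorem frustrated_triangles_interval_characterisation_general
    (n : ℕ) (G : SimpleGraph (Fin n)) (tmax : ℕ)
    (htm : tmax * (tmax + 1) < n - 2)
    (hf : fCount G < (tmax + 1) * (n - tmax - 2)) :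
    ∃! t : ℕ, t ≤ tmax ∧ t * (n - t - 1) ≤ fCount G ∧ fCount G ≤ t * (n - 2) := by
  obtain ⟨t, hlo, hhi, hdeg⟩ := G.exists_fCount_bounds
  rw [Fintype.card_fin] at hlo hhi hdeg
  have ht : t ≤ tmax := le_of_lt_succ_mul_sub_sub_two htm hf hlo hdeg
  have hsmall : ∀ s ≤ tmax, s * (s + 1) < n - 2 := fun s hs =>
    (Nat.mul_le_mul hs (Nat.succ_le_succ hs)).trans_lt htm
  refine ⟨t, ⟨ht, hlo, hhi⟩, fun s ⟨hs, hslo, hshi⟩ => le_antisymm ?_ ?_⟩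
  · exact le_of_mul_sub_sub_one_le_mul_sub_two (hsmall s hs) (hslo.trans hhi)
  · exact le_of_mul_sub_sub_one_le_mul_sub_two (hsmall t ht) (hlo.trans hshi)

theorem frustrated_triangles_interval_characterisation
    (n : ℕ) (hn : 3 ≤ n) (G : SimpleGraph (Fin n)) (tmax : ℕ)
    (htm : tmax * (tmax + 1) < n - 2)
    (htmax : ∀ t : ℕ, t * (t + 1) < n - 2 → t ≤ tmax)
    (hf : fCount G < (tmax + 1) * (n - tmax - 2)) :
    ∃! t : ℕ, t ≤ tmax ∧ t * (n - t - 1) ≤ fCount G ∧ fCount G ≤ t * (n - 2) :=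
  frustrated_triangles_interval_characterisation_general n G tmax htm hf
end

section
/- Let n ≥ 3, let G be a simple graph on n vertices, and let t ≤ t_max, where t_max is the largest natural number with t_max·(t_max+1) < n−2. Then t·(n−t−1) ≤ f(G) ≤ t·(n−2) if and only if there exists a complete bipartite graph K on the vertex set of G such that the symmetric difference of the edge sets of G and K has exactly t elements (i.e., G can be obtained from a complete bipartite graph by flipping exactly t pairs of vertices). -/
/-!
Flipping the pairs of a complete bipartite graph `K` does not change the parity of any triple,
since a cut meets every triangle in an even number of pairs. Hence `f(G) = f(Z)` for the graph
`Z = G ∆ K` of flipped pairs; let it have `d` edges. Every frustrated triple of `Z` contains an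
edge of `Z`, so `f ≤ d (n - 2)`; an edge `ab` together with any of the at least `n - 1 - d`
vertices adjacent to neither `a` nor `b` spans a triple whose only edge is `ab`, so
`d (n - 1 - d) ≤ f`. Switching at the neighbourhood of a vertex `v` isolates `v`, and every
remaining edge `ab` makes `vab` frustrated; so the least flip distance `d₀` satisfies
`n d₀ ≤ 3 f`. For `t (t + 1) < n - 2` these inequalities at `d = d₀` are incompatible with
`t (n - t - 1) ≤ f ≤ t (n - 2)` unless `d₀ = t`.
-/

open Finset

/-- `K` is a complete bipartite graph: the vertex set splits into two (possibly empty)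
parts such that the edges are exactly the pairs with one endpoint in each part. -/
def IsCompleteBipartite {V : Type*} (K : SimpleGraph V) : Prop :=
  ∃ X : Set V, ∀ u v : V, K.Adj u v ↔ ((u ∈ X ∧ v ∉ X) ∨ (v ∈ X ∧ u ∉ X))

open scoped symmDiff

namespace SimpleGraph

variable {V : Type*}

@[simp]
lemma symmDiff_adj (G H : SimpleGraph V) (a b : V) :
    (G ∆ H).Adj a b ↔ (G.Adj a b ↔ ¬H.Adj a b) := by
  simp only [symmDiff_def, sup_adj, sdiff_adj]
  tauto

lemma edgeSet_symmDiff (G H : SimpleGraph V) : (G ∆ H).edgeSet = G.edgeSet ∆ H.edgeSet := by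
  simp only [symmDiff_def, edgeSet_sup, edgeSet_sdiff, Set.sup_eq_union]

lemma ncard_symmDiff_edgeSet [Fintype V] (G H : SimpleGraph V) [DecidableRel (G ∆ H).Adj] :
    (G.edgeSet ∆ H.edgeSet).ncard = #(G ∆ H).edgeFinset := by
  rw [← edgeSet_symmDiff, ← coe_edgeFinset, Set.ncard_coe_finset]

lemma degree_add_degree_le_of_adj [Fintype V] [DecidableEq V] {G : SimpleGraph V}
    [DecidableRel G.Adj] {a b : V} (h : G.Adj a b) :
    G.degree a + G.degree b ≤ #G.edgeFinset + 1 := by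
  have hinter : G.incidenceFinset a ∩ G.incidenceFinset b = {s(a, b)} := by
    rw [← coe_inj]
    push_cast
    exact G.incidenceSet_inter_incidenceSet_of_adj h
  rw [← card_incidenceFinset_eq_degree, ← card_incidenceFinset_eq_degree,
    ← card_union_add_card_inter, hinter, card_singleton]
  gcongr
  exact union_subset (G.incidenceFinset_subset a) (G.incidenceFinset_subset b)

end SimpleGraph

open SimpleGraph

variable {V : Type*}

def cutGraph (X : Set V) : SimpleGraph V where
  Adj u w := ¬(u ∈ X ↔ w ∈ X)
  symm := ⟨fun _ _ h h' => h h'.symm⟩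
  loopless := ⟨fun _ h => h Iff.rfl⟩

lemma isCompleteBipartite_cutGraph (X : Set V) : IsCompleteBipartite (cutGraph X) :=
  ⟨X, fun u w => by simp only [cutGraph]; tauto⟩

lemma frustrated_symmDiff_iff {G K : SimpleGraph V} (hK : IsCompleteBipartite K) (u v w : V) :
    frustrated (G ∆ K) u v w ↔ frustrated G u v w := by
  obtain ⟨X, hX⟩ := hK
  simp only [frustrated, symmDiff_adj, hX]
  by_cases u ∈ X <;> by_cases v ∈ X <;> by_cases w ∈ X <;>
    by_cases G.Adj u v <;> by_cases G.Adj u w <;> by_cases G.Adj v w <;>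
    simp_all [Nat.odd_iff]

lemma adj_of_frustrated {G : SimpleGraph V} {u v w : V} (h : frustrated G u v w) :
    G.Adj u v ∨ G.Adj u w ∨ G.Adj v w := by
  by_contra! h'
  simp [frustrated, h'.1, h'.2.1, h'.2.2] at h

lemma frustrated_iff_adj_of_not_adj {G : SimpleGraph V} {a b c : V} (hab : ¬G.Adj a b)
    (hac : ¬G.Adj a c) : frustrated G a b c ↔ G.Adj b c := by
  by_cases hbc : G.Adj b c <;> simp [frustrated, hab, hac, hbc]

noncomputable def flipDistance (G : SimpleGraph V) : ℕ :=
  sInf {m | ∃ K : SimpleGraph V, IsCompleteBipartite K ∧ (G.edgeSet ∆ K.edgeSet).ncard = m}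

lemma exists_isCompleteBipartite_ncard_eq_flipDistance (G : SimpleGraph V) :
    ∃ K : SimpleGraph V, IsCompleteBipartite K ∧
      (G.edgeSet ∆ K.edgeSet).ncard = flipDistance G := by
  have hne : {m | ∃ K : SimpleGraph V, IsCompleteBipartite K ∧
      (G.edgeSet ∆ K.edgeSet).ncard = m}.Nonempty :=
    ⟨_, cutGraph ∅, isCompleteBipartite_cutGraph ∅, rfl⟩
  exact Nat.sInf_mem hne

lemma flipDistance_le {G K : SimpleGraph V} (hK : IsCompleteBipartite K) :
    flipDistance G ≤ (G.edgeSet ∆ K.edgeSet).ncard :=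
  Nat.sInf_le ⟨K, hK, rfl⟩

section Counting

variable [Fintype V] [DecidableEq V]

noncomputable def frustratedTriples (G : SimpleGraph V) : Finset (Finset V) := by
  classical
  exact {s ∈ univ.powersetCard 3 | ∃ u v w : V, u ≠ v ∧ u ≠ w ∧ v ≠ w ∧ s = {u, v, w} ∧
    frustrated G u v w}

lemma fCount_eq_card_frustratedTriples (G : SimpleGraph V) :
    fCount G = #(frustratedTriples G) :=
  rfl

lemma mem_frustratedTriples {G : SimpleGraph V} {s : Finset V} :
    s ∈ frustratedTriples G ↔
      ∃ u v w : V, u ≠ v ∧ u ≠ w ∧ v ≠ w ∧ s = {u, v, w} ∧ frustrated G u v w := by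
  simp only [frustratedTriples, mem_filter, mem_powersetCard, subset_univ, true_and,
    and_iff_right_iff_imp]
  rintro ⟨u, v, w, huv, huw, hvw, rfl, -⟩
  exact card_eq_three.2 ⟨u, v, w, huv, huw, hvw, rfl⟩

lemma card_eq_three_of_mem_frustratedTriples {G : SimpleGraph V} {s : Finset V}
    (hs : s ∈ frustratedTriples G) : #s = 3 := by
  obtain ⟨u, v, w, huv, huw, hvw, rfl, -⟩ := mem_frustratedTriples.1 hs
  exact card_eq_three.2 ⟨u, v, w, huv, huw, hvw, rfl⟩

lemma frustratedTriples_symmDiff (G : SimpleGraph V) {K : SimpleGraph V}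
    (hK : IsCompleteBipartite K) : frustratedTriples (G ∆ K) = frustratedTriples G := by
  ext s
  simp only [mem_frustratedTriples, frustrated_symmDiff_iff hK]

lemma card_filter_powersetCard_three_le {a b : V} (hab : a ≠ b) :
    #{s ∈ univ.powersetCard 3 | a ∈ s ∧ b ∈ s} ≤ Fintype.card V - 2 := by
  calc #{s ∈ univ.powersetCard 3 | a ∈ s ∧ b ∈ s}
      ≤ #(({a, b} : Finset V)ᶜ.image fun c => {a, b, c}) := card_le_card ?_
    _ ≤ #({a, b} : Finset V)ᶜ := card_image_le
    _ = Fintype.card V - 2 := by rw [card_compl, card_pair hab]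
  intro s hs
  simp only [mem_filter, mem_powersetCard, subset_univ, true_and] at hs
  obtain ⟨hcard, ha, hb⟩ := hs
  have hb' : b ∈ s.erase a := mem_erase.2 ⟨hab.symm, hb⟩
  obtain ⟨c, hc⟩ : ∃ c, (s.erase a).erase b = {c} := by
    rw [← card_eq_one, card_erase_of_mem hb', card_erase_of_mem ha, hcard]
  have hcs : c ∈ (s.erase a).erase b := hc ▸ mem_singleton_self c
  refine mem_image.2 ⟨c, ?_, ?_⟩
  · simp only [mem_erase] at hcs
    simp [hcs.1, hcs.2.1]
  · rw [← hc, insert_erase hb', insert_erase ha]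

variable (G : SimpleGraph V) [DecidableRel G.Adj]

lemma card_frustratedTriples_le_card_edgeFinset_mul :
    #(frustratedTriples G) ≤ #G.edgeFinset * (Fintype.card V - 2) := by
  rw [← mul_one #(frustratedTriples G)]
  refine card_mul_le_card_mul (fun s e => e ∈ s.sym2) ?_ ?_
  · intro s hs
    obtain ⟨u, v, w, huv, huw, hvw, rfl, hf⟩ := mem_frustratedTriples.1 hs
    rw [one_le_card]
    rcases adj_of_frustrated hf with h | h | h
    · exact ⟨s(u, v), (mem_bipartiteAbove _).2 ⟨mem_edgeFinset.2 h, by simp⟩⟩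
    · exact ⟨s(u, w), (mem_bipartiteAbove _).2 ⟨mem_edgeFinset.2 h, by simp⟩⟩
    · exact ⟨s(v, w), (mem_bipartiteAbove _).2 ⟨mem_edgeFinset.2 h, by simp⟩⟩
  · intro e he
    induction e using Sym2.ind with | h a b => ?_
    refine (card_le_card fun s hs => ?_).trans
      (card_filter_powersetCard_three_le (G.ne_of_adj (mem_edgeFinset.1 he)))
    obtain ⟨hs, hab⟩ := (mem_bipartiteBelow _).1 hs
    exact mem_filter.2 ⟨mem_powersetCard_univ.2 (card_eq_three_of_mem_frustratedTriples hs),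
      mk_mem_sym2_iff.1 hab⟩

lemma sub_le_card_compl_neighborFinset_union {a b : V} (h : G.Adj a b) :
    Fintype.card V - #G.edgeFinset - 1 ≤ #(G.neighborFinset a ∪ G.neighborFinset b)ᶜ := by
  have := (card_union_le (G.neighborFinset a) (G.neighborFinset b)).trans
    (G.degree_add_degree_le_of_adj h)
  rw [card_compl]
  omega

lemma sym2_inter_edgeFinset_eq_singleton {a b c : V} (hab : G.Adj a b) (hca : ¬G.Adj c a)
    (hcb : ¬G.Adj c b) : ({c, a, b} : Finset V).sym2 ∩ G.edgeFinset = {s(a, b)} := by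
  ext e
  induction e using Sym2.ind with | h x y => ?_
  simp only [mem_inter, mk_mem_sym2_iff, mem_insert, mem_singleton, mem_edgeFinset,
    mem_edgeSet, Sym2.eq_iff]
  constructor
  · rintro ⟨⟨rfl | rfl | rfl, rfl | rfl | rfl⟩, hxy⟩ <;> simp_all [G.adj_comm]
  · rintro (⟨rfl, rfl⟩ | ⟨rfl, rfl⟩) <;> simp [hab, hab.symm]

lemma card_edgeFinset_mul_le_card_frustratedTriples :
    #G.edgeFinset * (Fintype.card V - #G.edgeFinset - 1) ≤ #(frustratedTriples G) := by
  rw [← mul_one #(frustratedTriples G)]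
  refine card_mul_le_card_mul (fun e s => s.sym2 ∩ G.edgeFinset = {e}) ?_ ?_
  · intro e he
    induction e using Sym2.ind with | h a b => ?_
    have hab : G.Adj a b := mem_edgeFinset.1 he
    refine (sub_le_card_compl_neighborFinset_union G hab).trans
      (card_le_card_of_injOn (fun c => {c, a, b}) (fun c hc => ?_) ?_)
    · simp only [mem_coe, mem_compl, mem_union, mem_neighborFinset, not_or] at hc
      have hca : ¬G.Adj c a := fun h => hc.1 h.symm
      have hcb : ¬G.Adj c b := fun h => hc.2 h.symm
      refine (mem_bipartiteAbove _).2 ⟨mem_frustratedTriples.2 ⟨c, a, b, ?_, ?_,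
        G.ne_of_adj hab, rfl, (frustrated_iff_adj_of_not_adj hca hcb).2 hab⟩,
        sym2_inter_edgeFinset_eq_singleton G hab hca hcb⟩
      · rintro rfl; exact hc.2 hab.symm
      · rintro rfl; exact hc.1 hab
    · intro c hc c' hc' hcc'
      simp only [mem_coe, mem_compl, mem_union, mem_neighborFinset, not_or] at hc hc'
      have : c ∈ ({c', a, b} : Finset V) := by
        rw [← show ({c, a, b} : Finset V) = {c', a, b} from hcc']
        exact mem_insert_self _ _
      simp only [mem_insert, mem_singleton] at this
      rcases this with h | h | h
      · exact h
      · exact absurd (h ▸ hab.symm) hc.2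
      · exact absurd (h ▸ hab) hc.1
  · intro s _
    refine card_le_one.2 fun e he e' he' => singleton_inj.1 ?_
    exact ((mem_bipartiteBelow _).1 he).2.symm.trans ((mem_bipartiteBelow _).1 he').2

lemma card_edgeFinset_le_card_filter_mem {v : V} (hv : ∀ a, ¬G.Adj v a) :
    #G.edgeFinset ≤ #{s ∈ frustratedTriples G | v ∈ s} := by
  have hv_notMem : ∀ e ∈ G.edgeFinset, v ∉ e := by
    intro e he
    induction e using Sym2.ind with | h a b => ?_
    have hab : G.Adj a b := mem_edgeFinset.1 he
    rw [Sym2.mem_iff]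
    rintro (rfl | rfl)
    exacts [hv b hab, hv a hab.symm]
  refine card_le_card_of_injOn (fun e => insert v e.toFinset) (fun e he => ?_) ?_
  · induction e using Sym2.ind with | h a b => ?_
    have hab : G.Adj a b := mem_edgeFinset.1 he
    have hva : v ≠ a := by rintro rfl; exact hv b hab
    have hvb : v ≠ b := by rintro rfl; exact hv a hab.symm
    simp only [mem_coe, Sym2.toFinset_mk_eq]
    exact mem_filter.2 ⟨mem_frustratedTriples.2 ⟨v, a, b, hva, hvb, G.ne_of_adj hab, rfl,
      (frustrated_iff_adj_of_not_adj (hv a) (hv b)).2 hab⟩, mem_insert_self _ _⟩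
  · intro e he e' he' hee'
    refine Sym2.ext fun x => ?_
    by_cases hx : x = v
    · subst hx
      exact iff_of_false (hv_notMem e he) (hv_notMem e' he')
    · simpa [hx] using congrArg (x ∈ ·) hee'

end Counting

lemma mul_sub_two_lt_of_lt {n t d : ℕ} (hn : t * (t + 1) < n - 2) (hd : d < t) :
    d * (n - 2) < t * (n - t - 1) := by
  have hn2 : 2 ≤ n := by omega
  have htn : t + 1 ≤ n := by
    have : t ≤ t * (t + 1) := Nat.le_mul_of_pos_right t t.succ_pos
    omega
  rw [Nat.sub_sub]
  zify [hn2, htn] at hn hd ⊢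
  nlinarith

lemma lt_mul_sub_of_lt {n t d : ℕ} (hn : t * (t + 1) < n - 2) (hd : t < d)
    (hnd : n * d ≤ 3 * (t * (n - 2))) : t * (n - 2) < d * (n - d - 1) := by
  obtain ⟨m, rfl⟩ : ∃ m, n = m + 2 := ⟨n - 2, by omega⟩
  simp only [Nat.add_sub_cancel] at hn hnd ⊢
  have h3t : 3 * t ≤ m := by
    zify at hn ⊢
    nlinarith [sq_nonneg ((t : ℤ) - 1)]
  have hdm : d ≤ m + 1 := by
    by_contra! h
    nlinarith [Nat.mul_le_mul_left (m + 2) h]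
  rw [show m + 2 - d - 1 = m + 1 - d by omega]
  zify [hdm] at hn hd hnd ⊢
  have ht : 1 ≤ (t : ℤ) := by nlinarith
  have hd3 : (d : ℤ) ≤ 3 * t - 1 := by nlinarith
  have htt : 0 ≤ ((t : ℤ) - 1) * (t - 2) := by
    rcases le_or_gt (t : ℤ) 1 with h | h <;> nlinarith
  -- with `r = d - t - 1`, the slack `d (m + 1 - d) - t m` is
  -- `(m - t² - t - 1) (r + 1) + 1 + r (t² - t - r)`, and `r ≤ 2 t - 2`
  nlinarith [mul_nonneg (by omega : (0 : ℤ) ≤ d - t - 1)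
      (by nlinarith : (0 : ℤ) ≤ t * t - t - (d - t - 1)),
    mul_nonneg (by nlinarith : (0 : ℤ) ≤ m - t * t - t - 1) (by omega : (0 : ℤ) ≤ d - t)]

section FlipDistance

variable [Fintype V] [DecidableEq V] (G : SimpleGraph V)

lemma fCount_le_of_isCompleteBipartite {K : SimpleGraph V} (hK : IsCompleteBipartite K) :
    fCount G ≤ (G.edgeSet ∆ K.edgeSet).ncard * (Fintype.card V - 2) := by
  classical
  rw [fCount_eq_card_frustratedTriples, ← frustratedTriples_symmDiff G hK,
    ncard_symmDiff_edgeSet]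
  exact card_frustratedTriples_le_card_edgeFinset_mul _

lemma le_fCount_of_isCompleteBipartite {K : SimpleGraph V} (hK : IsCompleteBipartite K) :
    (G.edgeSet ∆ K.edgeSet).ncard * (Fintype.card V - (G.edgeSet ∆ K.edgeSet).ncard - 1) ≤
      fCount G := by
  classical
  rw [fCount_eq_card_frustratedTriples, ← frustratedTriples_symmDiff G hK,
    ncard_symmDiff_edgeSet]
  exact card_edgeFinset_mul_le_card_frustratedTriples _

lemma card_mul_flipDistance_le : Fintype.card V * flipDistance G ≤ 3 * fCount G := by
  classical
  have hv : ∀ v ∈ univ,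
      flipDistance G ≤ #((frustratedTriples G).bipartiteAbove (· ∈ ·) v) := by
    intro v _
    have hK := isCompleteBipartite_cutGraph (G.neighborSet v)
    have hiso : ∀ a, ¬(G ∆ cutGraph (G.neighborSet v)).Adj v a := by
      simp [cutGraph]
    calc flipDistance G ≤ _ := flipDistance_le hK
      _ = #(G ∆ _).edgeFinset := ncard_symmDiff_edgeSet G _
      _ ≤ #{s ∈ frustratedTriples (G ∆ _) | v ∈ s} :=
        card_edgeFinset_le_card_filter_mem _ hiso
      _ = _ := by rw [frustratedTriples_symmDiff G hK]; rfl
  have hs : ∀ s ∈ frustratedTriples G, #(univ.bipartiteBelow (· ∈ ·) s) ≤ 3 := by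
    intro s hs
    simp [bipartiteBelow, card_eq_three_of_mem_frustratedTriples hs]
  rw [fCount_eq_card_frustratedTriples, mul_comm 3]
  simpa using card_mul_le_card_mul (· ∈ ·) hv hs

end FlipDistance

theorem frustrated_triangles_interval_iff_flip_complete_bipartite_general
    (n : ℕ) (G : SimpleGraph (Fin n)) (tmax : ℕ)
    (htm : tmax * (tmax + 1) < n - 2)
    (t : ℕ) (ht : t ≤ tmax) :
    (t * (n - t - 1) ≤ fCount G ∧ fCount G ≤ t * (n - 2)) ↔
      ∃ K : SimpleGraph (Fin n), IsCompleteBipartite K ∧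
        (symmDiff G.edgeSet K.edgeSet).ncard = t := by
  have hsmall : t * (t + 1) < n - 2 := (Nat.mul_le_mul ht (by omega)).trans_lt htm
  constructor
  · rintro ⟨hlow, hup⟩
    obtain ⟨K, hK, hKd⟩ := exists_isCompleteBipartite_ncard_eq_flipDistance G
    have hupK := fCount_le_of_isCompleteBipartite G hK
    have hlowK := le_fCount_of_isCompleteBipartite G hK
    have hcount := card_mul_flipDistance_le G
    simp only [Fintype.card_fin, hKd] at hupK hlowK hcount
    refine ⟨K, hK, hKd.trans ?_⟩
    rcases lt_trichotomy (flipDistance G) t with hlt | heq | hgt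
    · have := mul_sub_two_lt_of_lt hsmall hlt
      omega
    · exact heq
    · have := lt_mul_sub_of_lt hsmall hgt (hcount.trans (by omega))
      omega
  · rintro ⟨K, hK, rfl⟩
    exact ⟨by simpa using le_fCount_of_isCompleteBipartite G hK,
      by simpa using fCount_le_of_isCompleteBipartite G hK⟩

theorem frustrated_triangles_interval_iff_flip_complete_bipartite
    (n : ℕ) (hn : 3 ≤ n) (G : SimpleGraph (Fin n)) (tmax : ℕ)
    (htm : tmax * (tmax + 1) < n - 2)
    (htmax : ∀ t : ℕ, t * (t + 1) < n - 2 → t ≤ tmax)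
    (t : ℕ) (ht : t ≤ tmax) :
    (t * (n - t - 1) ≤ fCount G ∧ fCount G ≤ t * (n - 2)) ↔
      ∃ K : SimpleGraph (Fin n), IsCompleteBipartite K ∧
        (symmDiff G.edgeSet K.edgeSet).ncard = t :=
  frustrated_triangles_interval_iff_flip_complete_bipartite_general n G tmax htm t ht
end

section
/- Let n ≥ 3, let G be a simple graph on n vertices, and let t ≥ 0 be a natural number. If f(G) < (t+1)·(n−t−2), then there exists a subset X of the vertex set of G such that the number of odd pairs of G with respect to the bipartition (X, Xᶜ) is at most t. -/
open Finset

/-- `{u, v}` is an odd pair of `G` with respect to the bipartition `(X, Xᶜ)`: either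
`uv` is an edge and `u, v` lie in the same part, or `uv` is a nonedge and `u, v` lie in
different parts. -/
def IsOddPair {V : Type*} (G : SimpleGraph V) (X : Set V) (u v : V) : Prop :=
  u ≠ v ∧ (G.Adj u v ↔ (u ∈ X ↔ v ∈ X))

/-- The number of odd pairs of `G` with respect to the bipartition `(X, Xᶜ)`. -/
noncomputable def oddPairCount {V : Type*} [Fintype V] [DecidableEq V]
    (G : SimpleGraph V) (X : Set V) : ℕ := by
  classical
  exact ((Finset.univ.powersetCard 2).filter
    (fun s : Finset V => ∃ u v : V, u ≠ v ∧ s = {u, v} ∧ IsOddPair G X u v)).card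

/-! Frustration of a triangle is the parity of its number of odd pairs, for every bipartition.
Induct on the vertex set: remove a vertex `v` and let `X` be optimal for `G - v`, with `m'` odd
pairs. Bipartitioning by the neighbourhood of `v` shows that `v` lies in at least `m` frustrated
triangles, which together with the induction hypothesis settles the case `m ≤ m'`. If `m' < m`,
extending `X` to `v` in either of the two ways shows that `v` has at least `c = m - m'` odd and
at least `c` even pairs to `G - v`; all but `m'` of the `a * b ≥ c (n - 1 - c)` cross pairs
between these two classes close a frustrated triangle with `v`, and the induction hypothesis for
`m'` provides the remaining ones. -/

section IsOddPair

variable {V : Type*} {G : SimpleGraph V} {X : Set V}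

theorem IsOddPair.symm {u v : V} (h : IsOddPair G X u v) : IsOddPair G X v u :=
  ⟨h.1.symm, by rw [G.adj_comm]; exact h.2.trans iff_comm⟩

theorem isOddPair_symmDiff_singleton {u v : V} (hu : u ≠ v) :
    IsOddPair G (symmDiff X {v}) v u ↔ ¬IsOddPair G X v u := by
  simp only [IsOddPair, Set.mem_symmDiff, Set.mem_singleton_iff, hu]
  tauto

theorem frustrated_of_isOddPair {u v w : V} (huv : u ≠ v) (huw : u ≠ w)
    (h_uv : ¬IsOddPair G X u v) (h_uw : ¬IsOddPair G X u w) (h_vw : IsOddPair G X v w) :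
    frustrated G u v w := by
  simp only [IsOddPair, huv, huw, ne_eq, not_false_eq_true, true_and] at h_uv h_uw
  obtain ⟨-, h_vw⟩ := h_vw
  unfold frustrated
  by_cases x : u ∈ X <;> by_cases y : v ∈ X <;> by_cases z : w ∈ X <;>
    simp_all [Nat.odd_iff]

end IsOddPair

theorem Finset.injOn_pair_of_disjoint {α : Type*} [DecidableEq α] {A B : Finset α}
    (h : Disjoint A B) :
    Set.InjOn (fun p : α × α => ({p.1, p.2} : Finset α)) ↑(A ×ˢ B) := by
  rintro ⟨a, b⟩ hab ⟨a', b'⟩ hab' heq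
  simp only [coe_product, Set.mem_prod, mem_coe] at hab hab' heq
  have ha : a ∈ ({a', b'} : Finset α) := heq ▸ mem_insert_self a {b}
  have hb : b ∈ ({a', b'} : Finset α) := heq ▸ mem_insert_of_mem (mem_singleton_self b)
  rw [mem_insert, mem_singleton] at ha hb
  have ha' : a ≠ b' := fun e => disjoint_left.1 h hab.1 (e ▸ hab'.2)
  have hb' : b ≠ a' := fun e => disjoint_left.1 h hab'.1 (e ▸ hab.2)
  simp [ha.resolve_right ha', hb.resolve_left hb']

section FrustratedTriangles

open scoped Classical

variable {V : Type*} [Fintype V] [DecidableEq V] (G : SimpleGraph V)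

noncomputable def frustratedTriangles (S : Finset V) : Finset (Finset V) :=
  (S.powersetCard 3).filter fun s =>
    ∃ u v w : V, u ≠ v ∧ u ≠ w ∧ v ≠ w ∧ s = {u, v, w} ∧ frustrated G u v w

noncomputable def oddPairs (X : Set V) (S : Finset V) : Finset (Finset V) :=
  (S.powersetCard 2).filter (fun s => ∃ u v : V, u ≠ v ∧ s = {u, v} ∧ IsOddPair G X u v)

theorem fCount_eq_card_frustratedTriangles : fCount G = #(frustratedTriangles G univ) := rfl

theorem oddPairCount_eq_card_oddPairs (X : Set V) :
    oddPairCount G X = #(oddPairs G X univ) := rfl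

theorem mem_frustratedTriangles {S : Finset V} {u v w : V} (hu : u ∈ S) (hv : v ∈ S)
    (hw : w ∈ S) (huv : u ≠ v) (huw : u ≠ w) (hvw : v ≠ w) (h : frustrated G u v w) :
    {u, v, w} ∈ frustratedTriangles G S := by
  refine mem_filter.2 ⟨mem_powersetCard.2 ⟨?_, ?_⟩, u, v, w, huv, huw, hvw, rfl, h⟩
  · simp [insert_subset_iff, hu, hv, hw]
  · rw [card_insert_of_notMem (by simp [huv, huw]), card_pair hvw]

theorem mem_oddPairs {X : Set V} {S s : Finset V} :
    s ∈ oddPairs G X S ↔ ∃ u ∈ S, ∃ v ∈ S, IsOddPair G X u v ∧ s = {u, v} := by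
  constructor
  · intro hs
    obtain ⟨hs, u, v, -, rfl, huv⟩ := mem_filter.1 hs
    have hs := (mem_powersetCard.1 hs).1
    exact ⟨u, hs (by simp), v, hs (by simp), huv, rfl⟩
  · rintro ⟨u, hu, v, hv, huv, rfl⟩
    refine mem_filter.2 ⟨mem_powersetCard.2 ⟨?_, card_pair huv.1⟩, u, v, huv.1, rfl, huv⟩
    simp [insert_subset_iff, hu, hv]

theorem oddPairs_congr {X Y : Set V} {S : Finset V} (h : ∀ u ∈ S, u ∈ X ↔ u ∈ Y) :
    oddPairs G X S = oddPairs G Y S := by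
  ext s
  simp only [mem_oddPairs]
  constructor <;> rintro ⟨u, hu, v, hv, huv, rfl⟩ <;> refine ⟨u, hu, v, hv, ?_, rfl⟩ <;>
    simpa only [IsOddPair, h u hu, h v hv] using huv

theorem card_frustratedTriangles_insert {v : V} {S : Finset V} (hv : v ∉ S) :
    #(frustratedTriangles G (insert v S)) =
      #(frustratedTriangles G S) + #((frustratedTriangles G (insert v S)).filter (v ∈ ·)) := by
  have avoiding :
      (frustratedTriangles G (insert v S)).filter (v ∉ ·) = frustratedTriangles G S := by
    ext s
    simp only [frustratedTriangles, mem_filter, mem_powersetCard]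
    constructor
    · rintro ⟨⟨⟨hs, hcard⟩, htri⟩, hvs⟩
      exact ⟨⟨(subset_insert_iff_of_notMem hvs).1 hs, hcard⟩, htri⟩
    · rintro ⟨⟨hs, hcard⟩, htri⟩
      exact ⟨⟨⟨hs.trans (subset_insert v S), hcard⟩, htri⟩, fun h => hv (hs h)⟩
  rw [← card_filter_add_card_filter_not (p := (v ∈ ·)), add_comm, avoiding]

theorem card_oddPairs_insert_le (X : Set V) {v : V} {S : Finset V} :
    #(oddPairs G X (insert v S)) ≤ #(S.filter (IsOddPair G X v)) + #(oddPairs G X S) := by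
  calc #(oddPairs G X (insert v S))
      ≤ #((S.filter (IsOddPair G X v)).image (fun u => {v, u}) ∪ oddPairs G X S) := by
        refine card_le_card fun s hs => ?_
        obtain ⟨a, ha, b, hb, hab, rfl⟩ := (mem_oddPairs G).1 hs
        rw [mem_insert] at ha hb
        rw [mem_union, mem_image]
        rcases ha with rfl | ha
        · exact Or.inl ⟨b, mem_filter.2 ⟨hb.resolve_left hab.1.symm, hab⟩, rfl⟩
        rcases hb with rfl | hb
        · exact Or.inl ⟨a, mem_filter.2 ⟨ha, hab.symm⟩, pair_comm _ _⟩
        · exact Or.inr ((mem_oddPairs G).2 ⟨a, ha, b, hb, hab, rfl⟩)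
    _ ≤ _ := (card_union_le _ _).trans (Nat.add_le_add_right card_image_le _)

theorem card_oddPairs_le_card_frustratedTriangles_through {v : V} {S : Finset V} (hv : v ∈ S) :
    #(oddPairs G {u | ¬G.Adj v u} S) ≤ #((frustratedTriangles G S).filter (v ∈ ·)) := by
  have even : ∀ u, ¬IsOddPair G {u | ¬G.Adj v u} v u := by
    rintro u ⟨-, h⟩
    by_cases hvu : G.Adj v u <;> simp_all
  have notMem : ∀ s ∈ oddPairs G {u | ¬G.Adj v u} S, v ∉ s := by
    intro s hs
    obtain ⟨a, -, b, -, hab, rfl⟩ := (mem_oddPairs G).1 hs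
    rw [mem_insert, mem_singleton]
    rintro (rfl | rfl)
    exacts [even b hab, even a hab.symm]
  refine card_le_card_of_injOn (insert v) (fun s hs => ?_) (fun s hs s' hs' h => ?_)
  · obtain ⟨a, ha, b, hb, hab, rfl⟩ := (mem_oddPairs G).1 hs
    have hva : v ≠ a := fun h => even b (h ▸ hab)
    have hvb : v ≠ b := fun h => even a (h ▸ hab.symm)
    exact mem_filter.2 ⟨mem_frustratedTriangles G hv ha hb hva hvb hab.1
      (frustrated_of_isOddPair hva hvb (even a) (even b) hab), mem_insert_self _ _⟩
  · simpa [erase_insert (notMem s hs), erase_insert (notMem s' hs')] using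
      congrArg (·.erase v) h

theorem card_mul_card_le_card_frustratedTriangles_add {v : V} {S : Finset V} (hv : v ∉ S)
    (X : Set V) :
    #(S.filter (IsOddPair G X v)) * #(S.filter (¬IsOddPair G X v ·)) ≤
      #((frustratedTriangles G (insert v S)).filter (v ∈ ·)) + #(oddPairs G X S) := by
  set A := S.filter (IsOddPair G X v)
  set B := S.filter (¬IsOddPair G X v ·)
  have hinj := injOn_pair_of_disjoint (disjoint_filter_filter_not S S (IsOddPair G X v))
  have hvp : ∀ p ∈ A ×ˢ B, v ∉ ({p.1, p.2} : Finset V) := by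
    intro p hp hvp
    obtain ⟨hp1, hp2⟩ := mem_product.1 hp
    rw [mem_insert, mem_singleton] at hvp
    rcases hvp with rfl | rfl
    exacts [hv (filter_subset _ _ hp1), hv (filter_subset _ _ hp2)]
  rw [← card_product, ← card_filter_add_card_filter_not (p := fun p => IsOddPair G X p.1 p.2),
    add_comm]
  refine Nat.add_le_add (card_le_card_of_injOn (fun p => insert v {p.1, p.2}) ?_ ?_)
    (card_le_card_of_injOn (fun p => {p.1, p.2}) ?_ (hinj.mono (coe_subset.2 (filter_subset _ _))))
  · rintro ⟨a, b⟩ hab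
    simp only [mem_coe, mem_filter, mem_product, A, B] at hab
    obtain ⟨⟨⟨ha, hva⟩, hb, hvb⟩, hab⟩ := hab
    have hbv : b ≠ v := ne_of_mem_of_not_mem hb hv
    have hba : b ≠ a := fun h => hvb (h ▸ hva)
    have htri := mem_frustratedTriangles G (mem_insert_of_mem hb) (mem_insert_self v S)
      (mem_insert_of_mem ha) hbv hba hva.1
      (frustrated_of_isOddPair hbv hba (fun h => hvb h.symm) (fun h => hab h.symm) hva)
    refine mem_filter.2 ⟨?_, mem_insert_self _ _⟩
    rwa [insert_comm, pair_comm] at htri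
  · intro p hp q hq h
    refine hinj (filter_subset _ _ hp) (filter_subset _ _ hq) ?_
    simpa [erase_insert (hvp p (filter_subset _ _ hp)), erase_insert (hvp q (filter_subset _ _ hq))]
      using congrArg (·.erase v) h
  · rintro ⟨a, b⟩ hab
    simp only [mem_coe, mem_filter, mem_product, A, B] at hab
    exact (mem_oddPairs G).2 ⟨a, hab.1.1.1, b, hab.1.2.1, hab.2, rfl⟩

theorem mul_le_card_frustratedTriangles_insert {v : V} {S : Finset V} (hv : v ∉ S)
    (ih : ∀ m, (∀ X : Set V, m ≤ #(oddPairs G X S)) →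
      m * (#S - m - 1) ≤ #(frustratedTriangles G S))
    {m : ℕ} (h : ∀ X : Set V, m ≤ #(oddPairs G X (insert v S))) :
    m * (#(insert v S) - m - 1) ≤ #(frustratedTriangles G (insert v S)) := by
  obtain ⟨X, hX⟩ := Finite.exists_min (fun X : Set V => #(oddPairs G X S))
  have hthrough := (h _).trans
    (card_oddPairs_le_card_frustratedTriangles_through G (mem_insert_self v S))
  rw [card_frustratedTriangles_insert G hv, card_insert_of_notMem hv]
  rcases le_or_gt m #(oddPairs G X S) with hm | hm
  · calc m * (#S + 1 - m - 1) ≤ m * (#S - m - 1) + m := by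
          rw [← Nat.mul_succ]; exact Nat.mul_le_mul_left _ (by omega)
      _ ≤ _ := Nat.add_le_add (ih m fun Y => hm.trans (hX Y)) hthrough
  have hne : ∀ u ∈ S, u ≠ v := fun u hu => ne_of_mem_of_not_mem hu hv
  have hodd := (h X).trans (card_oddPairs_insert_le G X)
  have heven := (h (symmDiff X {v})).trans (card_oddPairs_insert_le G (symmDiff X {v}))
  rw [oddPairs_congr G (Y := X) (fun u hu => by simp [Set.mem_symmDiff, hne u hu]),
    filter_congr (fun u hu => isOddPair_symmDiff_singleton (hne u hu))] at heven
  have hsum := card_filter_add_card_filter_not (s := S) (p := IsOddPair G X v)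
  have hcross := card_mul_card_le_card_frustratedTriangles_add G hv X
  have hih := ih _ hX
  rcases le_or_gt #S m with hmS | hmS
  · simp [Nat.sub_eq_zero_of_le (by omega : #S + 1 - m ≤ 1)]
  rw [show #S + 1 - m - 1 = #S - m by omega]
  set a := #(S.filter (IsOddPair G X v))
  set b := #(S.filter (¬IsOddPair G X v ·))
  set m' := #(oddPairs G X S)
  zify [hmS.le, hm.trans hmS, (by omega : 1 ≤ #S - m')] at hodd heven hsum hcross hih hm ⊢
  -- `(a - c) (b - c) ≥ 0` for `c = m - m'` bounds the cross pairs below by `c (#S - c)`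
  nlinarith [mul_nonneg (by omega : (0 : ℤ) ≤ a - (m - m'))
      (by omega : (0 : ℤ) ≤ b - (m - m')),
    mul_nonneg (by omega : (0 : ℤ) ≤ m') (by omega : (0 : ℤ) ≤ m - m' - 1)]

theorem mul_le_card_frustratedTriangles (S : Finset V) (m : ℕ)
    (h : ∀ X : Set V, m ≤ #(oddPairs G X S)) :
    m * (#S - m - 1) ≤ #(frustratedTriangles G S) := by
  induction S using Finset.induction_on generalizing m with
  | empty => simp
  | insert v S hv ih => exact mul_le_card_frustratedTriangles_insert G hv ih h

end FrustratedTriangles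

theorem exists_bipartition_with_few_odd_pairs_general
    (n : ℕ) (G : SimpleGraph (Fin n)) (t : ℕ)
    (hf : fCount G < (t + 1) * (n - t - 2)) :
    ∃ X : Set (Fin n), oddPairCount G X ≤ t := by
  by_contra! hX
  have := mul_le_card_frustratedTriangles G univ (t + 1) fun X =>
    oddPairCount_eq_card_oddPairs G X ▸ hX X
  rw [card_univ, Fintype.card_fin, Nat.sub_sub, ← fCount_eq_card_frustratedTriangles] at this
  exact absurd hf (not_lt.2 this)

theorem exists_bipartition_with_few_odd_pairs
    (n : ℕ) (hn : 3 ≤ n) (G : SimpleGraph (Fin n)) (t : ℕ)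
    (hf : fCount G < (t + 1) * (n - t - 2)) :
    ∃ X : Set (Fin n), oddPairCount G X ≤ t :=
  exists_bipartition_with_few_odd_pairs_general n G t hf
end

section
/- Let n ≥ 3, let G be a simple graph on n vertices, and let t ≥ 1 be a natural number. If f(G) > (t−1)·(n−2), then for every subset X of the vertex set of G, the number of odd pairs of G with respect to the bipartition (X, Xᶜ) is at least t. -/
open Finset

/-!
Whether a pair is odd with respect to `(X, Xᶜ)` is, mod 2, its edge indicator plus its
cut indicator. Every triangle crosses the cut an even number of times, so a frustrated
triangle contains an odd number of odd pairs, in particular at least one. A pair lies in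
only `n - 2` triples, hence `f(G) ≤ (n - 2) · #(odd pairs)` for every `X`.
-/

variable {V : Type*}

lemma exists_isOddPair_of_frustrated (G : SimpleGraph V) (X : Set V) {u v w : V}
    (huv : u ≠ v) (huw : u ≠ w) (hvw : v ≠ w) (hf : frustrated G u v w) :
    IsOddPair G X u v ∨ IsOddPair G X u w ∨ IsOddPair G X v w := by
  unfold frustrated at hf
  unfold IsOddPair
  by_cases G.Adj u v <;> by_cases G.Adj u w <;> by_cases G.Adj v w <;>
    by_cases u ∈ X <;> by_cases v ∈ X <;> by_cases w ∈ X <;> simp_all [Nat.odd_iff]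

section DoubleCounting

variable [Fintype V] [DecidableEq V]

lemma card_filter_superset_le (p : Finset V) (T : Finset (Finset V))
    (hT : ∀ s ∈ T, #s = #p + 1) :
    #{s ∈ T | p ⊆ s} ≤ Fintype.card V - #p := by
  calc #{s ∈ T | p ⊆ s}
      ≤ #((univ \ p).image (insert · p)) := by
        refine card_le_card fun s hs => ?_
        obtain ⟨hsT, hps⟩ := mem_filter.mp hs
        obtain ⟨a, ha, rfl⟩ := exists_eq_insert_iff.mpr ⟨hps, (hT s hsT).symm⟩
        exact mem_image_of_mem _ (mem_sdiff.mpr ⟨mem_univ a, ha⟩)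
    _ ≤ #(univ \ p) := card_image_le
    _ = Fintype.card V - #p := card_univ_sdiff p

lemma card_le_card_mul_of_forall_exists_subset (k : ℕ)
    (T Q : Finset (Finset V)) (hT : ∀ s ∈ T, #s = k + 1) (hQ : ∀ p ∈ Q, #p = k)
    (hcover : ∀ s ∈ T, ∃ p ∈ Q, p ⊆ s) :
    #T ≤ #Q * (Fintype.card V - k) := by
  have hcount := card_mul_le_card_mul (fun s p : Finset V => p ⊆ s) (m := 1)
    (fun s hs => one_le_card.mpr <| by
      simpa [bipartiteAbove, filter_nonempty_iff] using hcover s hs)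
    fun p hp => by
      have := card_filter_superset_le p T fun s hs => by rw [hT s hs, hQ p hp]
      rwa [hQ p hp] at this
  simpa using hcount

lemma fCount_le_oddPairCount_mul (G : SimpleGraph V) (X : Set V) :
    fCount G ≤ oddPairCount G X * (Fintype.card V - 2) := by
  classical
  unfold fCount oddPairCount
  refine card_le_card_mul_of_forall_exists_subset 2 _ _
    (fun s hs => (mem_powersetCard.mp (mem_filter.mp hs).1).2)
    (fun p hp => (mem_powersetCard.mp (mem_filter.mp hp).1).2) fun s hs => ?_
  obtain ⟨-, u, v, w, huv, huw, hvw, rfl, hfr⟩ := mem_filter.mp hs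
  have mem_pair {a b : V} (hab : a ≠ b) (h : IsOddPair G X a b) :
      ({a, b} : Finset V) ∈ (univ.powersetCard 2).filter
        (fun s => ∃ u v : V, u ≠ v ∧ s = {u, v} ∧ IsOddPair G X u v) :=
    mem_filter.mpr ⟨mem_powersetCard.mpr ⟨subset_univ _, card_pair hab⟩, a, b, hab, rfl, h⟩
  rcases exists_isOddPair_of_frustrated G X huv huw hvw hfr with h | h | h
  · exact ⟨_, mem_pair huv h, by grind⟩
  · exact ⟨_, mem_pair huw h, by grind⟩
  · exact ⟨_, mem_pair hvw h, by grind⟩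

end DoubleCounting

theorem every_bipartition_has_many_odd_pairs_general
    (n : ℕ) (G : SimpleGraph (Fin n)) (t : ℕ)
    (hf : (t - 1) * (n - 2) < fCount G) :
    ∀ X : Set (Fin n), t ≤ oddPairCount G X := by
  intro X
  have hcount := fCount_le_oddPairCount_mul G X
  rw [Fintype.card_fin] at hcount
  have hlt : t - 1 < oddPairCount G X := Nat.lt_of_mul_lt_mul_right (hf.trans_le hcount)
  omega

theorem every_bipartition_has_many_odd_pairs
    (n : ℕ) (hn : 3 ≤ n) (G : SimpleGraph (Fin n)) (t : ℕ) (ht : 1 ≤ t)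
    (hf : (t - 1) * (n - 2) < fCount G) :
    ∀ X : Set (Fin n), t ≤ oddPairCount G X :=
  every_bipartition_has_many_odd_pairs_general n G t hf
end

section
/- Let n ≥ 6 be even and let s be the largest natural number t such that t·(n−2) + 2 < (t+1)·(n−t−2) (such t exists since 0·(n−2)+2 = 2 < n−2). Then s·(n−2) + 2 is an even number and there is no simple graph G on n vertices with f(G) = s·(n−2) + 2. -/
open Finset

/-!
Choose a vertex `z` lying in at most `3f/n` frustrated triangles, and let `m` be that number.
Switching `G` along the neighbourhood of `z` keeps every triangle's frustration and isolates `z`;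
the switched graph then has exactly `m` edges. In any graph with `m` edges on `n` vertices, a
triple is frustrated iff it contains an odd number of edges; every edge lies in `n - 2` triples
and two distinct edges lie in at most one, whence `m(n-2) - m(m-1) ≤ f ≤ m(n-2)`.
For `f = s(n-2) + 2` the upper bound forces `m ≥ s + 1` and the choice of `z` forces
`m ≤ n - s - 2`, so `f ≥ m(n-1-m) ≥ (s+1)(n-s-2) > f`.
-/

section SetFamily

variable {α : Type*} [DecidableEq α]

theorem card_filter_powersetCard_superset {s t : Finset α} {n : ℕ} (hst : s ⊆ t)
    (hsn : #s ≤ n) :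
    #{u ∈ t.powersetCard n | s ⊆ u} = (#t - #s).choose (n - #s) := by
  rw [filter_powersetCard_subset s t n hst hsn, card_image_of_injOn, card_powersetCard,
    card_sdiff_of_subset hst]
  intro x hx y hy hxy
  have hdisj : ∀ v ∈ (t \ s).powersetCard (n - #s), Disjoint v s := fun v hv =>
    disjoint_of_subset_left (mem_powersetCard.1 hv).1 sdiff_disjoint
  rw [← union_sdiff_cancel_right (hdisj x hx), ← union_sdiff_cancel_right (hdisj y hy)]
  exact congrArg (· \ s) hxy

theorem exists_card_mul_card_filter_mem_le [Fintype α] [Nonempty α] {B : Finset (Finset α)}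
    {k : ℕ} (hB : ∀ t ∈ B, #t = k) : ∃ a, Fintype.card α * #{t ∈ B | a ∈ t} ≤ k * #B := by
  have hsum : ∑ a, #{t ∈ B | a ∈ t} = k * #B := by
    have := sum_card_bipartiteAbove_eq_sum_card_bipartiteBelow (s := univ) (t := B)
      (r := (· ∈ ·))
    simp only [bipartiteAbove, bipartiteBelow, filter_mem_eq_inter, univ_inter] at this
    rw [this, sum_const_nat hB, mul_comm]
  obtain ⟨a, -, ha⟩ := exists_le_of_sum_le univ_nonempty
    (f := fun a => Fintype.card α * #{t ∈ B | a ∈ t}) (g := fun _ => k * #B)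
    (by rw [← mul_sum, hsum, sum_const, card_univ, smul_eq_mul])
  exact ⟨a, ha⟩

theorem eq_union_of_subset_of_card_three {t e₁ e₂ : Finset α} (ht : #t = 3) (he₁ : #e₁ = 2)
    (he₂ : #e₂ = 2) (hne : e₁ ≠ e₂) (h₁ : e₁ ⊆ t) (h₂ : e₂ ⊆ t) : t = e₁ ∪ e₂ := by
  have hlt : e₁ ⊂ e₁ ∪ e₂ := ssubset_of_subset_of_ne subset_union_left fun h =>
    hne (eq_of_subset_of_card_le (union_eq_left.1 h.symm) (by omega)).symm
  refine (eq_of_subset_of_card_le (union_subset h₁ h₂) ?_).symm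
  have := card_lt_card hlt
  omega

theorem powersetCard_two_triple {u v w : α} (huv : u ≠ v) (huw : u ≠ w) (hvw : v ≠ w) :
    ({u, v, w} : Finset α).powersetCard 2 = {{u, v}, {u, w}, {v, w}} := by
  rw [powersetCard_succ_insert (by simp [huv, huw]), powersetCard_succ_insert (by simp [hvw]),
    powersetCard_eq_empty.2 (by simp)]
  simp only [powersetCard_one, image_singleton, map_singleton, empty_union,
    Function.Embedding.coeFn_mk]
  ext
  simp
  tauto

theorem le_ite_odd_add_two_mul_choose_two (c : ℕ) :
    c ≤ (if Odd c then 1 else 0) + 2 * c.choose 2 := by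
  rcases c with _ | _ | c
  · simp
  · simp
  · rw [Nat.choose_two_right, Nat.mul_div_cancel' (Nat.even_mul_pred_self _).two_dvd,
      Nat.add_sub_cancel]
    split_ifs <;> nlinarith

variable {W : Finset α} {E : Finset (Finset α)}

theorem filter_subset_eq_filter_powersetCard (hE : ∀ e ∈ E, #e = 2) (t : Finset α) :
    {e ∈ E | e ⊆ t} = {p ∈ t.powersetCard 2 | p ∈ E} := by
  ext p
  simp only [mem_filter, mem_powersetCard]
  exact ⟨fun ⟨hp, ht⟩ => ⟨⟨ht, hE p hp⟩, hp⟩, fun ⟨⟨ht, _⟩, hp⟩ => ⟨hp, ht⟩⟩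

theorem sum_card_filter_subset_powersetCard_three (hE : ∀ e ∈ E, e ⊆ W ∧ #e = 2) :
    ∑ t ∈ W.powersetCard 3, #{e ∈ E | e ⊆ t} = #E * (#W - 2) := by
  have := sum_card_bipartiteAbove_eq_sum_card_bipartiteBelow (s := E) (t := W.powersetCard 3)
    (r := (· ⊆ ·))
  simp only [bipartiteAbove, bipartiteBelow] at this
  rw [← this, sum_const_nat fun e he => ?_]
  obtain ⟨heW, he⟩ := hE e he
  rw [show 3 = #e + 1 by omega, card_filter_powersetCard_superset heW (by omega), he,
    Nat.add_sub_cancel_left, Nat.choose_one_right]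

theorem sum_choose_two_card_filter_subset_le (hE : ∀ e ∈ E, #e = 2) :
    ∑ t ∈ W.powersetCard 3, (#{e ∈ E | e ⊆ t}).choose 2 ≤ (#E).choose 2 := by
  have hpairs (t : Finset α) :
      (#{e ∈ E | e ⊆ t}).choose 2 = #{p ∈ E.powersetCard 2 | ∀ e ∈ p, e ⊆ t} := by
    rw [← card_powersetCard]
    congr 1
    ext p
    simp only [mem_powersetCard, mem_filter, subset_iff (s₁ := p)]
    grind
  have := sum_card_bipartiteAbove_eq_sum_card_bipartiteBelow (s := W.powersetCard 3)
    (t := E.powersetCard 2) (r := fun t p => ∀ e ∈ p, e ⊆ t)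
  simp only [bipartiteAbove, bipartiteBelow] at this
  simp_rw [hpairs, this, ← card_powersetCard 2 E]
  refine (sum_le_sum fun p hp => card_le_one.2 fun t ht t' ht' => ?_).trans_eq
    (card_eq_sum_ones _).symm
  simp only [mem_filter, mem_powersetCard] at hp ht ht'
  obtain ⟨e₁, e₂, hne, rfl⟩ := card_eq_two.1 hp.2
  have h₁ := hE e₁ (hp.1 (by simp))
  have h₂ := hE e₂ (hp.1 (by simp))
  rw [eq_union_of_subset_of_card_three ht.1.2 h₁ h₂ hne (ht.2 e₁ (by simp)) (ht.2 e₂ (by simp)),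
    eq_union_of_subset_of_card_three ht'.1.2 h₁ h₂ hne (ht'.2 e₁ (by simp)) (ht'.2 e₂ (by simp))]

theorem card_filter_odd_le (hE : ∀ e ∈ E, e ⊆ W ∧ #e = 2) :
    #{t ∈ W.powersetCard 3 | Odd #{e ∈ E | e ⊆ t}} ≤ #E * (#W - 2) := by
  rw [card_filter, ← sum_card_filter_subset_powersetCard_three hE]
  gcongr with t
  split_ifs with h
  · exact h.pos
  · exact Nat.zero_le _

theorem le_card_filter_odd_add (hE : ∀ e ∈ E, e ⊆ W ∧ #e = 2) :
    #E * (#W - 2) ≤ #{t ∈ W.powersetCard 3 | Odd #{e ∈ E | e ⊆ t}} + #E * (#E - 1) := by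
  rw [← sum_card_filter_subset_powersetCard_three hE, card_filter,
    ← Nat.mul_div_cancel' (Nat.even_mul_pred_self #E).two_dvd, ← Nat.choose_two_right]
  calc ∑ t ∈ W.powersetCard 3, #{e ∈ E | e ⊆ t}
      ≤ ∑ t ∈ W.powersetCard 3, ((if Odd #{e ∈ E | e ⊆ t} then 1 else 0) +
          2 * (#{e ∈ E | e ⊆ t}).choose 2) :=
        sum_le_sum fun t _ => le_ite_odd_add_two_mul_choose_two _
    _ ≤ _ := by
      rw [sum_add_distrib, ← mul_sum]
      gcongr
      exact sum_choose_two_card_filter_subset_le fun e he => (hE e he).2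

end SetFamily

theorem odd_ite_add_ite_add_ite (p q r : Prop) [Decidable p] [Decidable q] [Decidable r] :
    Odd ((if p then 1 else 0) + (if q then 1 else 0) + (if r then 1 else 0) : ℕ) ↔
      (p ↔ (q ↔ r)) := by
  by_cases p <;> by_cases q <;> by_cases r <;> simp [*, Nat.odd_iff]

namespace SimpleGraph

variable {V : Type*} (G : SimpleGraph V)

theorem frustrated_iff (u v w : V) :
    frustrated G u v w ↔ (G.Adj u v ↔ (G.Adj u w ↔ G.Adj v w)) := by
  classical
  exact odd_ite_add_ite_add_ite _ _ _

/-- `G` switched along the neighbourhood of `z`; this isolates `z`. -/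
def switchAt (z : V) : SimpleGraph V where
  Adj x y := x ≠ y ∧ frustrated G z x y
  symm := ⟨fun x y h => ⟨h.1.symm, by
    have := h.2
    rw [frustrated_iff, G.adj_comm y x] at *
    grind⟩⟩
  loopless := ⟨fun x h => h.1 rfl⟩

theorem not_switchAt_adj (z x : V) : ¬ (G.switchAt z).Adj z x := by
  simp [switchAt, frustrated_iff]

/-- Each edge of the complete graph on `{u, v, w, z}` lies in exactly two of its triangles. -/
theorem frustrated_switchAt_iff {z u v w : V} (huv : u ≠ v) (huw : u ≠ w) (hvw : v ≠ w) :
    frustrated (G.switchAt z) u v w ↔ frustrated G u v w := by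
  simp only [frustrated_iff, switchAt, ne_eq, huv, huw, hvw, not_false_eq_true, true_and]
  grind

variable [Fintype V] [DecidableEq V]

noncomputable def edgePairs : Finset (Finset V) := by
  classical
  exact {p ∈ univ.powersetCard 2 | ∀ x ∈ p, ∀ y ∈ p, x ≠ y → G.Adj x y}

theorem edgePairs_subset_card_two : ∀ e ∈ G.edgePairs, e ⊆ univ ∧ #e = 2 := by
  classical
  exact fun _ he => mem_powersetCard.1 (mem_filter.1 he).1

theorem pair_mem_edgePairs {x y : V} (hxy : x ≠ y) : {x, y} ∈ G.edgePairs ↔ G.Adj x y := by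
  simp only [edgePairs, mem_filter, mem_powersetCard, subset_univ, card_pair hxy, true_and,
    mem_insert, mem_singleton]
  constructor
  · exact fun h => h x (Or.inl rfl) y (Or.inr rfl) hxy
  · rintro h a (rfl | rfl) b (rfl | rfl) hab <;>
      first | exact absurd rfl hab | exact h | exact h.symm

theorem mem_edgePairs {p : Finset V} : p ∈ G.edgePairs ↔ ∃ x y, G.Adj x y ∧ p = {x, y} := by
  constructor
  · intro hp
    obtain ⟨x, y, hxy, rfl⟩ := card_eq_two.1 (G.edgePairs_subset_card_two p hp).2
    exact ⟨x, y, (G.pair_mem_edgePairs hxy).1 hp, rfl⟩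
  · rintro ⟨x, y, hxy, rfl⟩
    exact (G.pair_mem_edgePairs hxy.ne).2 hxy

noncomputable def frustratedTriples : Finset (Finset V) := by
  classical
  exact ((Finset.univ.powersetCard 3).filter
    (fun s : Finset V => ∃ u v w : V, u ≠ v ∧ u ≠ w ∧ v ≠ w ∧ s = {u, v, w} ∧
      frustrated G u v w))

theorem fCount_eq_card_frustratedTriples : fCount G = #G.frustratedTriples := rfl

theorem frustrated_iff_odd_card_edgePairs {u v w : V} (huv : u ≠ v) (huw : u ≠ w)
    (hvw : v ≠ w) : frustrated G u v w ↔ Odd #{e ∈ G.edgePairs | e ⊆ {u, v, w}} := by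
  classical
  have h₁ : ({u, v} : Finset V) ≠ {u, w} := fun h => by
    simpa [huv.symm, hvw] using congrArg (v ∈ ·) h
  have h₂ : ({u, v} : Finset V) ≠ {v, w} := fun h => by
    simpa [huv, huw] using congrArg (u ∈ ·) h
  have h₃ : ({u, w} : Finset V) ≠ {v, w} := fun h => by
    simpa [huv, huw] using congrArg (u ∈ ·) h
  rw [filter_subset_eq_filter_powersetCard (fun e he => (G.edgePairs_subset_card_two e he).2),
    powersetCard_two_triple huv huw hvw, card_filter, sum_insert (by simp [h₁, h₂]),
    sum_insert (by simp [h₃]), sum_singleton, ← add_assoc,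
    odd_ite_add_ite_add_ite, frustrated_iff, G.pair_mem_edgePairs huv, G.pair_mem_edgePairs huw,
    G.pair_mem_edgePairs hvw]

theorem frustratedTriples_eq_filter_odd : G.frustratedTriples =
    {t ∈ (univ : Finset V).powersetCard 3 | Odd #{e ∈ G.edgePairs | e ⊆ t}} := by
  classical
  refine filter_congr fun t ht => ⟨?_, fun hodd => ?_⟩
  · rintro ⟨u, v, w, huv, huw, hvw, rfl, hf⟩
    exact (G.frustrated_iff_odd_card_edgePairs huv huw hvw).1 hf
  · obtain ⟨u, v, w, huv, huw, hvw, rfl⟩ := card_eq_three.1 (mem_powersetCard.1 ht).2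
    exact ⟨u, v, w, huv, huw, hvw, rfl, (G.frustrated_iff_odd_card_edgePairs huv huw hvw).2 hodd⟩

theorem triple_mem_frustratedTriples {u v w : V} (huv : u ≠ v) (huw : u ≠ w) (hvw : v ≠ w) :
    {u, v, w} ∈ G.frustratedTriples ↔ frustrated G u v w := by
  rw [frustratedTriples_eq_filter_odd, mem_filter, mem_powersetCard,
    ← G.frustrated_iff_odd_card_edgePairs huv huw hvw]
  simp [card_eq_three.2 ⟨u, v, w, huv, huw, hvw, rfl⟩]

theorem card_of_mem_frustratedTriples {t : Finset V} (ht : t ∈ G.frustratedTriples) :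
    #t = 3 := by
  rw [frustratedTriples_eq_filter_odd] at ht
  exact (mem_powersetCard.1 (mem_filter.1 ht).1).2

theorem fCount_le : fCount G ≤ #G.edgePairs * (Fintype.card V - 2) := by
  rw [fCount_eq_card_frustratedTriples, frustratedTriples_eq_filter_odd, ← card_univ]
  exact card_filter_odd_le G.edgePairs_subset_card_two

theorem le_fCount_add :
    #G.edgePairs * (Fintype.card V - 2) ≤ fCount G + #G.edgePairs * (#G.edgePairs - 1) := by
  rw [fCount_eq_card_frustratedTriples, frustratedTriples_eq_filter_odd, ← card_univ]
  exact le_card_filter_odd_add G.edgePairs_subset_card_two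

theorem frustratedTriples_switchAt (z : V) :
    (G.switchAt z).frustratedTriples = G.frustratedTriples := by
  classical
  refine filter_congr fun t _ => ?_
  constructor <;> rintro ⟨u, v, w, huv, huw, hvw, rfl, hf⟩ <;>
    exact ⟨u, v, w, huv, huw, hvw, rfl,
      by simpa only [G.frustrated_switchAt_iff huv huw hvw] using hf⟩

theorem fCount_switchAt (z : V) : fCount (G.switchAt z) = fCount G := by
  rw [fCount_eq_card_frustratedTriples, frustratedTriples_switchAt,
    fCount_eq_card_frustratedTriples]

theorem card_edgePairs_switchAt (z : V) :
    #(G.switchAt z).edgePairs = #{t ∈ G.frustratedTriples | z ∈ t} := by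
  classical
  have hz : ∀ p ∈ (G.switchAt z).edgePairs, z ∉ p := by
    intro p hp hzp
    obtain ⟨x, y, hxy, rfl⟩ := (G.switchAt z).mem_edgePairs.1 hp
    rcases mem_insert.1 hzp with rfl | h
    · exact G.not_switchAt_adj z y hxy
    · exact G.not_switchAt_adj z x (mem_singleton.1 h ▸ hxy.symm)
  refine card_nbij' (insert z) (·.erase z) (fun p hp => ?_) (fun t ht => ?_)
    (fun p hp => erase_insert (hz p hp)) (fun t ht => insert_erase (mem_filter.1 ht).2)
  · obtain ⟨x, y, hxy, rfl⟩ := (G.switchAt z).mem_edgePairs.1 hp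
    have hzxy := hz _ hp
    simp only [mem_insert, mem_singleton, not_or] at hzxy
    refine mem_filter.2 ⟨(G.triple_mem_frustratedTriples hzxy.1 hzxy.2 hxy.1).2 hxy.2,
      mem_insert_self _ _⟩
  · obtain ⟨htF, hzt⟩ := mem_filter.1 ht
    obtain ⟨x, y, hxy, hxyt⟩ := card_eq_two.1 <| by
      rw [card_erase_of_mem hzt, G.card_of_mem_frustratedTriples htF]
    have hzxy : z ∉ ({x, y} : Finset V) := hxyt ▸ notMem_erase z t
    simp only [mem_insert, mem_singleton, not_or] at hzxy
    rw [← insert_erase hzt, hxyt, G.triple_mem_frustratedTriples hzxy.1 hzxy.2 hxy] at htF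
    simp only [hxyt, mem_coe]
    exact (G.switchAt z).pair_mem_edgePairs hxy |>.2 ⟨hxy, htF⟩

end SimpleGraph

theorem mul_self_add_add_four_lt_of_gap {n s : ℕ}
    (hs : (s : ℤ) * ((n : ℤ) - 2) + 2 < ((s : ℤ) + 1) * ((n : ℤ) - s - 2)) :
    s * s + s + 4 < n := by
  have : (s : ℤ) * s + s + 4 < n := by nlinarith
  exact_mod_cast this

theorem ne_gap_value_of_bounds {n s m F : ℕ}
    (hs : (s : ℤ) * ((n : ℤ) - 2) + 2 < ((s : ℤ) + 1) * ((n : ℤ) - s - 2))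
    (hup : F ≤ m * (n - 2)) (hlow : m * (n - 2) ≤ F + m * (m - 1)) (havg : n * m ≤ 3 * F) :
    F ≠ s * (n - 2) + 2 := by
  rintro rfl
  have hn := mul_self_add_add_four_lt_of_gap hs
  have hm : 1 ≤ m := Nat.pos_of_ne_zero (by rintro rfl; simp at hup)
  zify [show 2 ≤ n by omega, hm] at hup hlow havg
  have hms : (s : ℤ) + 1 ≤ m := by
    by_contra! h
    nlinarith [mul_le_mul_of_nonneg_right (Int.lt_add_one_iff.1 h) (by omega : (0:ℤ) ≤ n - 2)]
  have hmn : (m : ℤ) ≤ n - s - 2 := by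
    have hq : (0 : ℤ) ≤ s * s - 3 * s + 3 := by nlinarith [sq_nonneg (2 * (s : ℤ) - 3)]
    have : (n : ℤ) * m ≤ n * (n - s - 2) := by
      nlinarith [mul_le_mul_of_nonneg_right (show (s : ℤ) * s + s + 5 ≤ n by omega) hq]
    exact le_of_mul_le_mul_left this (by omega)
  -- `m (n - 1 - m) - (s + 1) (n - s - 2) = (m - s - 1) (n - s - 2 - m)`
  nlinarith [mul_nonneg (sub_nonneg.2 hms) (sub_nonneg.2 hmn)]

theorem even_case_gap_value_not_realisable_general
    (n : ℕ) (hne : Even n) (s : ℕ)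
    (hs : (s : ℤ) * ((n : ℤ) - 2) + 2 < ((s : ℤ) + 1) * ((n : ℤ) - s - 2)) :
    Even (s * (n - 2) + 2) ∧ ∀ G : SimpleGraph (Fin n), fCount G ≠ s * (n - 2) + 2 := by
  refine ⟨((hne.tsub even_two).mul_left s).add even_two, fun G => ?_⟩
  have : Nonempty (Fin n) := ⟨⟨0, (Nat.zero_le _).trans_lt (mul_self_add_add_four_lt_of_gap hs)⟩⟩
  obtain ⟨z, hz⟩ := exists_card_mul_card_filter_mem_le fun t => G.card_of_mem_frustratedTriples
  rw [← G.fCount_switchAt z]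
  apply ne_gap_value_of_bounds hs (m := #(G.switchAt z).edgePairs)
  · simpa using (G.switchAt z).fCount_le
  · simpa using (G.switchAt z).le_fCount_add
  · rw [G.fCount_switchAt, G.card_edgePairs_switchAt, G.fCount_eq_card_frustratedTriples]
    simpa using hz

theorem even_case_gap_value_not_realisable
    (n : ℕ) (hn : 6 ≤ n) (hne : Even n) (s : ℕ)
    (hs : (s : ℤ) * ((n : ℤ) - 2) + 2 < ((s : ℤ) + 1) * ((n : ℤ) - s - 2))
    (hmax : ∀ t : ℕ, (t : ℤ) * ((n : ℤ) - 2) + 2 < ((t : ℤ) + 1) * ((n : ℤ) - t - 2) → t ≤ s) :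
    Even (s * (n - 2) + 2) ∧ ∀ G : SimpleGraph (Fin n), fCount G ≠ s * (n - 2) + 2 :=
  even_case_gap_value_not_realisable_general n hne s hs
end

section
/- Let G be a simple graph and let v be a vertex of G. Let G_v be the graph obtained from G by toggling the edge/nonedge status of every pair {u, v} with u ≠ v. Then a triple of three distinct vertices is a frustrated triangle of G_v if and only if it is a frustrated triangle of G; in particular, f(G_v) = f(G). -/
open Finset

/-- The graph obtained from `G` by flipping the vertex `v`, i.e. toggling the
edge/nonedge status of every pair `{u, v}` with `u ≠ v`. -/
def flipVertex {V : Type*} (G : SimpleGraph V) (v : V) : SimpleGraph V where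
  Adj u w := u ≠ w ∧ ((u = v ∨ w = v) ↔ ¬ G.Adj u w)
  symm := ⟨by
    intro u w h
    obtain ⟨h1, h2⟩ := h
    refine ⟨h1.symm, ?_⟩
    rw [or_comm, SimpleGraph.adj_comm]
    exact h2⟩
  loopless := ⟨fun u h => h.1 rfl⟩

/-! Flipping `v` toggles exactly those pairs of a triple that contain `v`. A triple of distinct
vertices either avoids `v` or contains it in exactly two of its three pairs, so the parity of
the number of induced edges does not change. -/

open Classical in
theorem frustrated_iff_zmod_two {V : Type*} (G : SimpleGraph V) (u w x : V) :
    frustrated G u w x ↔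
      ((if G.Adj u w then 1 else 0) + (if G.Adj u x then 1 else 0) +
        (if G.Adj w x then 1 else 0) : ZMod 2) = 1 := by
  rw [frustrated, ← ZMod.natCast_eq_one_iff_odd]
  push_cast [Nat.cast_ite]
  rfl

open Classical in
theorem flipVertex_adj_indicator {V : Type*} (G : SimpleGraph V) (v : V) {u w : V}
    (huw : u ≠ w) :
    (if (flipVertex G v).Adj u w then 1 else 0 : ZMod 2) =
      (if G.Adj u w then 1 else 0) + (if u = v ∨ w = v then 1 else 0) := by
  have hadj : (flipVertex G v).Adj u w ↔ ((u = v ∨ w = v) ↔ ¬G.Adj u w) :=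
    and_iff_right huw
  by_cases hG : G.Adj u w <;> by_cases hv : u = v ∨ w = v <;> simp [hadj, hG, hv]
  decide

open Classical in
theorem pairs_containing_count_zmod_two_eq_zero {V : Type*} {u w x : V} (v : V)
    (huw : u ≠ w) (hux : u ≠ x) (hwx : w ≠ x) :
    ((if u = v ∨ w = v then 1 else 0) + (if u = v ∨ x = v then 1 else 0) +
      (if w = v ∨ x = v then 1 else 0) : ZMod 2) = 0 := by
  by_cases hu : u = v
  · subst hu
    simp [huw.symm, hux.symm]
    decide
  by_cases hw : w = v
  · subst hw
    simp [hu, hwx.symm]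
    decide
  by_cases hx : x = v
  · simp [hu, hw, hx]
    decide
  · simp [hu, hw, hx]

theorem frustrated_flipVertex_iff {V : Type*} (G : SimpleGraph V) (v : V) {u w x : V}
    (huw : u ≠ w) (hux : u ≠ x) (hwx : w ≠ x) :
    frustrated (flipVertex G v) u w x ↔ frustrated G u w x := by
  classical
  rw [frustrated_iff_zmod_two, frustrated_iff_zmod_two, flipVertex_adj_indicator G v huw,
    flipVertex_adj_indicator G v hux, flipVertex_adj_indicator G v hwx]
  have hpairs := pairs_containing_count_zmod_two_eq_zero v huw hux hwx
  exact ⟨fun h => by linear_combination h - hpairs, fun h => by linear_combination h + hpairs⟩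

theorem fCount_congr {V : Type*} [Fintype V] [DecidableEq V] {G H : SimpleGraph V}
    (h : ∀ u w x : V, u ≠ w → u ≠ x → w ≠ x → (frustrated G u w x ↔ frustrated H u w x)) :
    fCount G = fCount H := by
  classical
  unfold fCount
  congr 1
  refine Finset.filter_congr fun s _ => ?_
  refine exists₃_congr fun u w x => ?_
  constructor <;> rintro ⟨huw, hux, hwx, hs, hf⟩
  · exact ⟨huw, hux, hwx, hs, (h u w x huw hux hwx).mp hf⟩
  · exact ⟨huw, hux, hwx, hs, (h u w x huw hux hwx).mpr hf⟩

theorem flipVertex_preserves_frustrated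
    {V : Type*} [Fintype V] [DecidableEq V] (G : SimpleGraph V) (v : V) :
    (∀ u w x : V, u ≠ w → u ≠ x → w ≠ x →
      (frustrated (flipVertex G v) u w x ↔ frustrated G u w x)) ∧
    fCount (flipVertex G v) = fCount G :=
  have hfrustrated : ∀ u w x : V, u ≠ w → u ≠ x → w ≠ x →
      (frustrated (flipVertex G v) u w x ↔ frustrated G u w x) :=
    fun _ _ _ => frustrated_flipVertex_iff G v
  ⟨hfrustrated, fCount_congr hfrustrated⟩
end

section
/- Let G be a simple graph on a finite vertex set. Then f(G) = 0 if and only if G is complete bipartite, i.e., there is a partition of the vertex set of G into two (possibly empty) parts such that the edges of G are exactly the pairs with one endpoint in each part. -/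
open Finset

/-!
A triple is frustrated exactly when `Adj v w` differs from `Adj u v ↔ Adj u w`. Hence in a graph
without frustrated triangles, fixing a vertex `v₀`, two vertices are adjacent iff exactly one of
them is a neighbour of `v₀`: the graph is complete bipartite with the neighbourhood of `v₀` as one
part. Conversely, if adjacency is "lying on different sides of `X`", the three adjacencies of a
triple sum to zero mod 2.
-/

section

variable {V : Type*} (G : SimpleGraph V)

theorem frustrated_iff (u v w : V) :
    frustrated G u v w ↔ (G.Adj v w ↔ (G.Adj u v ↔ G.Adj u w)) := by
  unfold frustrated
  by_cases huv : G.Adj u v <;> by_cases huw : G.Adj u w <;> by_cases hvw : G.Adj v w <;>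
    simp [huv, huw, hvw, Nat.odd_iff]

theorem frustrated.distinct {u v w : V} (h : frustrated G u v w) : u ≠ v ∧ u ≠ w ∧ v ≠ w := by
  rw [frustrated_iff] at h
  refine ⟨?_, ?_, ?_⟩ <;> rintro rfl <;> simp [G.adj_comm] at h

theorem isCompleteBipartite_iff :
    IsCompleteBipartite G ↔ ∃ X : Set V, ∀ u v, G.Adj u v ↔ ¬(u ∈ X ↔ v ∈ X) := by
  unfold IsCompleteBipartite
  exact exists_congr fun X => forall₂_congr fun u v => by tauto

theorem IsCompleteBipartite.not_frustrated (hG : IsCompleteBipartite G) (u v w : V) :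
    ¬frustrated G u v w := by
  obtain ⟨X, hX⟩ := (isCompleteBipartite_iff G).mp hG
  rw [frustrated_iff, hX, hX, hX]
  tauto

theorem isCompleteBipartite_of_forall_not_frustrated (hG : ∀ u v w, ¬frustrated G u v w) :
    IsCompleteBipartite G := by
  rw [isCompleteBipartite_iff]
  rcases isEmpty_or_nonempty V with hV | ⟨⟨v₀⟩⟩
  · exact ⟨∅, fun u => isEmptyElim u⟩
  · refine ⟨G.neighborSet v₀, fun u v => ?_⟩
    have h := hG v₀ u v
    rw [frustrated_iff] at h
    simp only [SimpleGraph.mem_neighborSet]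
    tauto

end

theorem fCount_eq_zero_iff_forall_not_frustrated {V : Type*} [Fintype V] [DecidableEq V]
    (G : SimpleGraph V) : fCount G = 0 ↔ ∀ u v w, ¬frustrated G u v w := by
  classical
  unfold fCount
  rw [card_eq_zero, filter_eq_empty_iff]
  constructor
  · intro h u v w hfr
    obtain ⟨huv, huw, hvw⟩ := hfr.distinct
    refine h ?_ ⟨u, v, w, huv, huw, hvw, rfl, hfr⟩
    exact mem_powersetCard.mpr ⟨subset_univ _, card_eq_three.mpr ⟨u, v, w, huv, huw, hvw, rfl⟩⟩
  · rintro h s - ⟨u, v, w, -, -, -, -, hfr⟩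
    exact h u v w hfr

theorem fCount_eq_zero_iff_completeBipartite
    {V : Type*} [Fintype V] [DecidableEq V] (G : SimpleGraph V) :
    fCount G = 0 ↔ IsCompleteBipartite G := by
  rw [fCount_eq_zero_iff_forall_not_frustrated]
  exact ⟨isCompleteBipartite_of_forall_not_frustrated G, IsCompleteBipartite.not_frustrated G⟩
end

section
/- Let G be a simple graph with n vertices and e edges, let p be the number of triangles of G (triples of distinct vertices inducing 3 edges), and let d_v denote the degree of vertex v. Then, as integers, f(G) = e·n − Σ_{v ∈ V(G)} d_v² + 4·p. -/
open Finset

/-!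
Sum the indicator of "frustrated" over all ordered triples `(u, v, w)` of vertices. If
`x, y, z ∈ {0, 1}` indicate the edges `uv, uw, vw`, the parity of `x + y + z` is
`(1 - (1 - 2x)(1 - 2y)(1 - 2z)) / 2 = x + y + z - 2 (xy + xz + yz) + 4xyz`.
A frustrated triple, like a triangle, has pairwise distinct vertices, so the left side is
`6 f(G)` without any distinctness condition. On the right, each linear term sums to `2e · n`,
each quadratic term to `Σ d_v²` (a cherry `v - u - w` counted with `v = w` allowed), and the
cubic term to `6p`.
-/

open SimpleGraph

variable {V : Type*}

section Orderings
variable [DecidableEq V]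

def orderings (u v w : V) : Finset (V × V × V) :=
  {(u, v, w), (u, w, v), (v, u, w), (v, w, u), (w, u, v), (w, v, u)}

theorem card_orderings {u v w : V} (huv : u ≠ v) (huw : u ≠ w) (hvw : v ≠ w) :
    #(orderings u v w) = 6 := by
  simp [orderings, huv, huw, hvw, huv.symm, huw.symm, hvw.symm]

theorem mem_orderings {u v w a b c : V} (hab : a ≠ b) (hac : a ≠ c) (hbc : b ≠ c)
    (ha : a ∈ ({u, v, w} : Finset V)) (hb : b ∈ ({u, v, w} : Finset V))
    (hc : c ∈ ({u, v, w} : Finset V)) : (a, b, c) ∈ orderings u v w := by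
  simp only [orderings, mem_insert, mem_singleton] at ha hb hc ⊢
  rcases ha with rfl | rfl | rfl <;> rcases hb with rfl | rfl | rfl <;>
    rcases hc with rfl | rfl | rfl <;> first | contradiction | simp

theorem card_filter_eq_six_mul_card [Fintype V] (R : V → V → V → Prop)
    [DecidablePred fun t : V × V × V => R t.1 t.2.1 t.2.2]
    (h12 : ∀ u v w, R u v w → R v u w) (h23 : ∀ u v w, R u v w → R u w v)
    (hne : ∀ u v w, R u v w → u ≠ v ∧ u ≠ w ∧ v ≠ w)
    {S : Finset (Finset V)} (hS : ∀ s, s ∈ S ↔ ∃ u v w, R u v w ∧ s = {u, v, w}) :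
    #{t : V × V × V | R t.1 t.2.1 t.2.2} = 6 * #S := by
  have hmaps : ∀ t ∈ ({t : V × V × V | R t.1 t.2.1 t.2.2} : Finset _),
      ({t.1, t.2.1, t.2.2} : Finset V) ∈ S := fun t ht =>
    (hS _).2 ⟨_, _, _, (mem_filter.1 ht).2, rfl⟩
  rw [card_eq_sum_card_fiberwise hmaps, sum_const_nat (m := 6), mul_comm]
  intro s hs
  obtain ⟨u, v, w, hR, rfl⟩ := (hS s).1 hs
  obtain ⟨huv, huw, hvw⟩ := hne u v w hR
  rw [← card_orderings huv huw hvw]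
  congr 1
  ext ⟨a, b, c⟩
  simp only [mem_filter, mem_univ, true_and]
  constructor
  · rintro ⟨hRabc, hset⟩
    obtain ⟨hab, hac, hbc⟩ := hne a b c hRabc
    exact mem_orderings hab hac hbc (hset ▸ by simp) (hset ▸ by simp) (hset ▸ by simp)
  · simp only [orderings, mem_insert, mem_singleton, Prod.mk.injEq]
    rintro (⟨rfl, rfl, rfl⟩ | ⟨rfl, rfl, rfl⟩ | ⟨rfl, rfl, rfl⟩ | ⟨rfl, rfl, rfl⟩ |
        ⟨rfl, rfl, rfl⟩ | ⟨rfl, rfl, rfl⟩)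
    · exact ⟨hR, rfl⟩
    · exact ⟨h23 _ _ _ hR, by rw [pair_comm]⟩
    · exact ⟨h12 _ _ _ hR, insert_comm ..⟩
    · exact ⟨h23 _ _ _ (h12 _ _ _ hR), by rw [pair_comm, insert_comm]⟩
    · exact ⟨h12 _ _ _ (h23 _ _ _ hR), by rw [insert_comm, pair_comm]⟩
    · exact ⟨h12 _ _ _ (h23 _ _ _ (h12 _ _ _ hR)), by rw [insert_comm, pair_comm, insert_comm]⟩

end Orderings

section TripleSums
variable [Fintype V]

theorem natCast_card_filter_triple (P : V → V → V → Prop) [∀ u v w, Decidable (P u v w)] :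
    (#{t : V × V × V | P t.1 t.2.1 t.2.2} : ℤ) = ∑ u, ∑ v, ∑ w, if P u v w then 1 else 0 := by
  simp only [card_filter, Fintype.sum_prod_type, Nat.cast_sum, Nat.cast_ite, Nat.cast_one,
    Nat.cast_zero]

theorem sum_sum_sum_rotate {M : Type*} [AddCommMonoid M] (F : V → V → V → M) :
    ∑ u, ∑ v, ∑ w, F u v w = ∑ u, ∑ v, ∑ w, F w u v := by
  rw [sum_comm]
  exact sum_congr rfl fun _ _ => sum_comm

theorem sum_sum_sum_parity_poly {R : Type*} [CommRing R] (a : V → V → R) (ha : ∀ u v, a u v = a v u) :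
    ∑ u, ∑ v, ∑ w, (a u v + a u w + a v w - 2 * (a u v * a u w + a u v * a v w + a u w * a v w) +
      4 * (a u v * a u w * a v w)) =
    3 * ∑ u, ∑ v, ∑ _w : V, a u v - 6 * ∑ u, ∑ v, ∑ w, a u v * a u w +
      4 * ∑ u, ∑ v, ∑ w, a u v * a u w * a v w := by
  have hL₂ : ∑ u, ∑ v, ∑ w, a u w = ∑ u, ∑ v, ∑ _w : V, a u v :=
    sum_congr rfl fun _ _ => sum_comm
  have hL₃ : ∑ u, ∑ v, ∑ w, a v w = ∑ u, ∑ v, ∑ _w : V, a u v := sum_sum_sum_rotate _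
  have hQ₂ : ∑ u, ∑ v, ∑ w, a u v * a v w = ∑ u, ∑ v, ∑ w, a u v * a u w := by
    rw [sum_sum_sum_rotate]
    simp_rw [ha _ _, mul_comm]
  have hQ₃ : ∑ u, ∑ v, ∑ w, a u w * a v w = ∑ u, ∑ v, ∑ w, a u v * a u w := by
    rw [← hQ₂, sum_sum_sum_rotate]
    simp_rw [ha _ _, mul_comm]
  calc _ = (∑ u, ∑ v, ∑ w, a u v + ∑ u, ∑ v, ∑ w, a u w + ∑ u, ∑ v, ∑ w, a v w) -
        2 * (∑ u, ∑ v, ∑ w, a u v * a u w + ∑ u, ∑ v, ∑ w, a u v * a v w +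
          ∑ u, ∑ v, ∑ w, a u w * a v w) + 4 * ∑ u, ∑ v, ∑ w, a u v * a u w * a v w := by
        simp only [sum_add_distrib, sum_sub_distrib, mul_sum, mul_add]
        rfl
    _ = _ := by
        rw [hL₂, hL₃, hQ₂, hQ₃]
        ring

end TripleSums

section Frustrated
variable {G : SimpleGraph V} {u v w : V}

theorem frustrated.swap_left (h : frustrated G u v w) : frustrated G v u w := by
  unfold frustrated at *
  rw [G.adj_comm v u]
  convert h using 1
  ring

theorem frustrated.swap_right (h : frustrated G u v w) : frustrated G u w v := by
  unfold frustrated at *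
  rw [G.adj_comm w v]
  convert h using 1
  ring

theorem frustrated.ne (h : frustrated G u v w) : u ≠ v ∧ u ≠ w ∧ v ≠ w := by
  unfold frustrated at h
  refine ⟨?_, ?_, ?_⟩ <;> rintro rfl <;> split_ifs at h <;> simp_all [G.adj_comm, Nat.odd_iff]

theorem ite_frustrated [DecidableRel G.Adj] [Decidable (frustrated G u v w)] :
    (if frustrated G u v w then 1 else 0 : ℤ) =
      G.adjMatrix ℤ u v + G.adjMatrix ℤ u w + G.adjMatrix ℤ v w -
        2 * (G.adjMatrix ℤ u v * G.adjMatrix ℤ u w + G.adjMatrix ℤ u v * G.adjMatrix ℤ v w +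
          G.adjMatrix ℤ u w * G.adjMatrix ℤ v w) +
        4 * (G.adjMatrix ℤ u v * G.adjMatrix ℤ u w * G.adjMatrix ℤ v w) := by
  simp only [frustrated, adjMatrix_apply]
  by_cases G.Adj u v <;> by_cases G.Adj u w <;> by_cases G.Adj v w <;> simp [*, Nat.odd_iff]

end Frustrated

section SixFold
variable [Fintype V] [DecidableEq V] (G : SimpleGraph V)

open Classical in
theorem six_mul_fCount : 6 * fCount G = #{t : V × V × V | frustrated G t.1 t.2.1 t.2.2} := by
  unfold fCount
  refine (card_filter_eq_six_mul_card (frustrated G) (fun _ _ _ => frustrated.swap_left)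
    (fun _ _ _ => frustrated.swap_right) (fun _ _ _ h => h.ne) fun s => ?_).symm
  simp only [mem_filter, mem_powersetCard_univ]
  constructor
  · rintro ⟨-, u, v, w, -, -, -, rfl, h⟩
    exact ⟨u, v, w, h, rfl⟩
  · rintro ⟨u, v, w, h, rfl⟩
    obtain ⟨huv, huw, hvw⟩ := h.ne
    exact ⟨card_eq_three.2 ⟨u, v, w, huv, huw, hvw, rfl⟩, u, v, w, huv, huw, hvw, rfl, h⟩

theorem six_mul_card_cliqueFinset_three [DecidableRel G.Adj] :
    6 * #(G.cliqueFinset 3) =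
      #{t : V × V × V | G.Adj t.1 t.2.1 ∧ G.Adj t.1 t.2.2 ∧ G.Adj t.2.1 t.2.2} := by
  refine (card_filter_eq_six_mul_card (fun u v w => G.Adj u v ∧ G.Adj u w ∧ G.Adj v w)
    (fun _ _ _ h => ⟨h.1.symm, h.2.2, h.2.1⟩) (fun _ _ _ h => ⟨h.2.1, h.1, h.2.2.symm⟩)
    (fun _ _ _ h => ⟨h.1.ne, h.2.1.ne, h.2.2.ne⟩) fun s => ?_).symm
  simp only [mem_cliqueFinset_iff, is3Clique_iff, and_assoc]

end SixFold

namespace SimpleGraph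
variable [Fintype V] (G : SimpleGraph V) [DecidableRel G.Adj]

theorem sum_adjMatrix_apply (u : V) : ∑ v, G.adjMatrix ℤ u v = G.degree u := by
  simpa [Matrix.mulVec, dotProduct] using G.adjMatrix_mulVec_const_apply (α := ℤ) (a := 1) (v := u)

theorem sum_sum_sum_adjMatrix :
    ∑ u, ∑ v, ∑ _w : V, G.adjMatrix ℤ u v = 2 * #G.edgeFinset * Fintype.card V := by
  simp_rw [sum_const, card_univ, nsmul_eq_mul, ← mul_sum, sum_adjMatrix_apply]
  rw [← Nat.cast_sum, sum_degrees_eq_twice_card_edges]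
  push_cast
  ring

theorem sum_sum_sum_adjMatrix_mul :
    ∑ u, ∑ v, ∑ w, G.adjMatrix ℤ u v * G.adjMatrix ℤ u w = ∑ u, (G.degree u : ℤ) ^ 2 := by
  simp_rw [← sum_mul_sum, sum_adjMatrix_apply, sq]

theorem sum_sum_sum_adjMatrix_mul_mul [DecidableEq V] :
    ∑ u, ∑ v, ∑ w, G.adjMatrix ℤ u v * G.adjMatrix ℤ u w * G.adjMatrix ℤ v w =
      6 * #(G.cliqueFinset 3) := by
  rw [← Nat.cast_ofNat, ← Nat.cast_mul, six_mul_card_cliqueFinset_three,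
    natCast_card_filter_triple fun u v w => G.Adj u v ∧ G.Adj u w ∧ G.Adj v w]
  simp only [adjMatrix_apply, ite_zero_mul_ite_zero, mul_one, and_assoc]

theorem sum_ite_frustrated [DecidableEq V] [∀ u v w, Decidable (frustrated G u v w)] :
    ∑ u, ∑ v, ∑ w, (if frustrated G u v w then 1 else 0 : ℤ) =
      6 * (#G.edgeFinset * Fintype.card V - ∑ u, (G.degree u : ℤ) ^ 2 +
        4 * #(G.cliqueFinset 3)) := by
  simp only [ite_frustrated]
  rw [sum_sum_sum_parity_poly _ fun u v => (G.isSymm_adjMatrix.apply u v).symm,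
    sum_sum_sum_adjMatrix, sum_sum_sum_adjMatrix_mul, sum_sum_sum_adjMatrix_mul_mul]
  ring

end SimpleGraph

theorem fCount_formula_degrees
    (n : ℕ) (G : SimpleGraph (Fin n)) [DecidableRel G.Adj] (e p : ℕ)
    (he : e = G.edgeFinset.card) (hp : p = (G.cliqueFinset 3).card) :
    (fCount G : ℤ) = e * n - ∑ v : Fin n, (G.degree v : ℤ) ^ 2 + 4 * p := by
  classical
  have h := congrArg (Nat.cast : ℕ → ℤ) (six_mul_fCount G)
  rw [natCast_card_filter_triple (frustrated G), G.sum_ite_frustrated, Fintype.card_fin] at h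
  subst he hp
  push_cast at h
  linarith
end

section
/- Let G be a simple graph with n vertices and e edges, let p be the number of triangles of G (triples of distinct vertices inducing 3 edges), and let q be the number of unordered pairs of edges of G that share no vertex. Then, as integers, f(G) = e·(n − e − 1) + 4·p + 2·q. -/
open Finset

open Classical in
noncomputable def kk {n : ℕ} (G : SimpleGraph (Fin n)) (s : Finset (Fin n)) : ℕ :=
  (G.edgeFinset.filter (fun ed => ∀ x ∈ ed, x ∈ s)).card

open Classical in
lemma edge_card_aux {n : ℕ} (G : SimpleGraph (Fin n)) [DecidableRel G.Adj]
    {ed : Sym2 (Fin n)} (hed : ed ∈ G.edgeFinset) :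
    (((univ.powersetCard 3).filter (fun s : Finset (Fin n) => ∀ x ∈ ed, x ∈ s)).card = n - 2)
      ∧ 2 ≤ n := by
  classical
  induction ed with
  | _ a b =>
    have hab : a ≠ b := (SimpleGraph.mem_edgeSet G |>.mp (SimpleGraph.mem_edgeFinset.mp hed)).ne
    have habs : ({a, b} : Finset (Fin n)).card = 2 := by
      rw [card_insert_of_notMem (by simpa using hab), card_singleton]
    have h2n : 2 ≤ n := by
      calc 2 = ({a, b} : Finset (Fin n)).card := habs.symm
        _ ≤ (univ : Finset (Fin n)).card := card_le_card (subset_univ _)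
        _ = n := by simp
    refine ⟨?_, h2n⟩
    have himg : (univ.powersetCard 3).filter (fun s : Finset (Fin n) => ∀ x ∈ s(a, b), x ∈ s)
        = (univ \ {a, b}).image (fun x => insert x {a, b}) := by
      ext s
      simp only [mem_filter, mem_powersetCard_univ, Sym2.mem_iff, forall_eq_or_imp, forall_eq,
        mem_image, mem_sdiff, mem_univ, true_and]
      constructor
      · rintro ⟨hcard, ha, hb⟩
        have hsub : ({a, b} : Finset (Fin n)) ⊆ s := by
          intro y hy; rcases mem_insert.mp hy with rfl | hy
          · exact ha
          · rw [mem_singleton] at hy; subst hy; exact hb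
        have h1 : (s \ {a, b}).card = 1 := by
          rw [card_sdiff_of_subset hsub, hcard, habs]
        obtain ⟨x, hx⟩ := card_eq_one.mp h1
        refine ⟨x, ?_, ?_⟩
        · have : x ∈ s \ {a, b} := hx ▸ mem_singleton_self x
          exact (mem_sdiff.mp this).2
        · have := sdiff_union_of_subset hsub
          rw [hx] at this
          rw [← this]; ext z; simp; tauto
      · rintro ⟨x, hx, rfl⟩
        refine ⟨?_, ?_, ?_⟩
        · rw [card_insert_of_notMem hx, habs]
        · simp
        · simp
    rw [himg, card_image_of_injOn, card_sdiff_of_subset (subset_univ _), habs, card_univ, Fintype.card_fin]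
    intro x hx y hy hxy
    have : x ∈ insert y ({a, b} : Finset (Fin n)) := by rw [show insert y ({a,b}:Finset (Fin n)) = insert x {a,b} from hxy.symm]; exact mem_insert_self x _
    rcases mem_insert.mp this with rfl | h
    · rfl
    · exact absurd h (mem_sdiff.mp hx).2

open Classical in
lemma sum_kk {n : ℕ} (G : SimpleGraph (Fin n)) [DecidableRel G.Adj] :
    ∑ s ∈ univ.powersetCard 3, (kk G s : ℤ) = G.edgeFinset.card * ((n : ℤ) - 2) := by
  classical
  have hswapN : ∑ s ∈ univ.powersetCard 3, kk G s
      = ∑ ed ∈ G.edgeFinset,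
          ((univ.powersetCard 3).filter (fun s : Finset (Fin n) => ∀ x ∈ ed, x ∈ s)).card := by
    simp only [kk, card_filter]
    rw [Finset.sum_comm]
    congr!
  have : ∑ s ∈ univ.powersetCard 3, (kk G s : ℤ)
      = ∑ ed ∈ G.edgeFinset,
          ((((univ.powersetCard 3).filter (fun s : Finset (Fin n) => ∀ x ∈ ed, x ∈ s)).card : ℤ)) := by
    exact_mod_cast congrArg (Nat.cast : ℕ → ℤ) hswapN
  rw [this, Finset.sum_congr rfl (fun ed hed => ?_), sum_const, nsmul_eq_mul]
  obtain ⟨h1, h2⟩ := edge_card_aux G hed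
  rw [h1]
  push_cast [h2]
  ring

open Classical in
lemma pair_card_one {n : ℕ} (G : SimpleGraph (Fin n)) [DecidableRel G.Adj]
    {e1 e2 : Sym2 (Fin n)} (h1 : e1 ∈ G.edgeFinset) (h2 : e2 ∈ G.edgeFinset) (hne : e1 ≠ e2)
    (hsh : ∃ x, x ∈ e1 ∧ x ∈ e2) :
    ((univ.powersetCard 3).filter
      (fun s : Finset (Fin n) => (∀ x ∈ e1, x ∈ s) ∧ (∀ x ∈ e2, x ∈ s))).card = 1 := by
  classical
  obtain ⟨x, hx1, hx2⟩ := hsh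
  obtain ⟨d1, rfl⟩ := Sym2.mem_iff_exists.mp hx1
  obtain ⟨d2, rfl⟩ := Sym2.mem_iff_exists.mp hx2
  have hxd1 : x ≠ d1 := fun h =>
    G.not_isDiag_of_mem_edgeSet (SimpleGraph.mem_edgeFinset.mp h1) (Sym2.mk_isDiag_iff.mpr h)
  have hxd2 : x ≠ d2 := fun h =>
    G.not_isDiag_of_mem_edgeSet (SimpleGraph.mem_edgeFinset.mp h2) (Sym2.mk_isDiag_iff.mpr h)
  have hd12 : d1 ≠ d2 := fun h => hne (by rw [h])
  have hc3 : ({x, d1, d2} : Finset (Fin n)).card = 3 := by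
    rw [card_insert_of_notMem (by simp [hxd1, hxd2]),
      card_insert_of_notMem (by simpa using hd12), card_singleton]
  have : (univ.powersetCard 3).filter
      (fun s : Finset (Fin n) => (∀ y ∈ s(x, d1), y ∈ s) ∧ (∀ y ∈ s(x, d2), y ∈ s))
      = {({x, d1, d2} : Finset (Fin n))} := by
    ext s
    simp only [mem_filter, mem_powersetCard_univ, Sym2.mem_iff, forall_eq_or_imp, forall_eq,
      mem_singleton]
    constructor
    · rintro ⟨hcard, ⟨hxs, h1s⟩, -, h2s⟩
      have hsub : ({x, d1, d2} : Finset (Fin n)) ⊆ s := by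
        intro y hy
        simp only [mem_insert, mem_singleton] at hy
        rcases hy with rfl | rfl | rfl <;> assumption
      exact (Finset.eq_of_subset_of_card_le hsub (by rw [hcard, hc3])).symm
    · rintro rfl
      refine ⟨hc3, ⟨by simp, by simp⟩, by simp, by simp⟩
  rw [this, card_singleton]

open Classical in
lemma pair_card_zero {n : ℕ} (G : SimpleGraph (Fin n)) [DecidableRel G.Adj]
    {e1 e2 : Sym2 (Fin n)} (h1 : e1 ∈ G.edgeFinset) (h2 : e2 ∈ G.edgeFinset)
    (hsh : ¬ ∃ x, x ∈ e1 ∧ x ∈ e2) :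
    ((univ.powersetCard 3).filter
      (fun s : Finset (Fin n) => (∀ x ∈ e1, x ∈ s) ∧ (∀ x ∈ e2, x ∈ s))).card = 0 := by
  classical
  rw [Finset.card_eq_zero, Finset.filter_eq_empty_iff]
  rintro s hs ⟨hs1, hs2⟩
  induction e1 with
  | _ a b =>
  induction e2 with
  | _ c d =>
  push_neg at hsh
  have hab : a ≠ b := fun h =>
    G.not_isDiag_of_mem_edgeSet (SimpleGraph.mem_edgeFinset.mp h1) (Sym2.mk_isDiag_iff.mpr h)
  have hcd : c ≠ d := fun h =>
    G.not_isDiag_of_mem_edgeSet (SimpleGraph.mem_edgeFinset.mp h2) (Sym2.mk_isDiag_iff.mpr h)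
  have hac : a ≠ c := fun h => hsh a (by simp) (by simp [h])
  have had : a ≠ d := fun h => hsh a (by simp) (by simp [h])
  have hbc : b ≠ c := fun h => hsh b (by simp) (by simp [h])
  have hbd : b ≠ d := fun h => hsh b (by simp) (by simp [h])
  have hsub : ({a, b, c, d} : Finset (Fin n)) ⊆ s := by
    intro y hy
    simp only [mem_insert, mem_singleton] at hy
    rcases hy with rfl | rfl | rfl | rfl
    · exact hs1 y (by simp)
    · exact hs1 y (by simp)
    · exact hs2 y (by simp)
    · exact hs2 y (by simp)
  have hc4 : ({a, b, c, d} : Finset (Fin n)).card = 4 := by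
    rw [card_insert_of_notMem (by simp [hab, hac, had]),
      card_insert_of_notMem (by simp [hbc, hbd]),
      card_insert_of_notMem (by simpa using hcd), card_singleton]
  have := card_le_card hsub
  rw [hc4, mem_powersetCard_univ.mp hs] at this
  omega

open Classical in
lemma two_q {n : ℕ} (G : SimpleGraph (Fin n)) [DecidableRel G.Adj] :
    (G.edgeFinset.offDiag.filter
      (fun pr : Sym2 (Fin n) × Sym2 (Fin n) => ∀ x ∈ pr.1, x ∉ pr.2)).card
    = 2 * ((G.edgeFinset.powersetCard 2).filter
      (fun P => ∀ e₁ ∈ P, ∀ e₂ ∈ P, e₁ ≠ e₂ → ∀ x : Fin n, x ∈ e₁ → x ∉ e₂)).card := by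
  classical
  set Q := (G.edgeFinset.powersetCard 2).filter
      (fun P => ∀ e₁ ∈ P, ∀ e₂ ∈ P, e₁ ≠ e₂ → ∀ x : Fin n, x ∈ e₁ → x ∉ e₂) with hQ
  set S := G.edgeFinset.offDiag.filter
      (fun pr : Sym2 (Fin n) × Sym2 (Fin n) => ∀ x ∈ pr.1, x ∉ pr.2) with hS
  have hmap : ∀ pr ∈ S, ({pr.1, pr.2} : Finset (Sym2 (Fin n))) ∈ Q := by
    rintro ⟨a, b⟩ hpr
    simp only [hS, mem_filter, mem_offDiag] at hpr
    obtain ⟨⟨ha, hb, hab⟩, hdisj⟩ := hpr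
    simp only [hQ, mem_filter, mem_powersetCard]
    refine ⟨⟨?_, ?_⟩, ?_⟩
    · intro y hy
      simp only [mem_insert, mem_singleton] at hy
      rcases hy with rfl | rfl <;> assumption
    · rw [card_insert_of_notMem (by simpa using hab), card_singleton]
    · intro e₁ he₁ e₂ he₂ hne x hx
      simp only [mem_insert, mem_singleton] at he₁ he₂
      rcases he₁ with rfl | rfl <;> rcases he₂ with rfl | rfl
      · exact absurd rfl hne
      · exact hdisj x hx
      · intro hx2; exact hdisj x hx2 hx
      · exact absurd rfl hne
  rw [Finset.card_eq_sum_card_fiberwise hmap]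
  rw [Finset.sum_congr rfl (fun P hP => ?_), sum_const, smul_eq_mul, mul_comm]
  simp only [hQ, mem_filter, mem_powersetCard] at hP
  obtain ⟨⟨hPE, hP2⟩, hPprop⟩ := hP
  obtain ⟨f1, f2, hf12, rfl⟩ := Finset.card_eq_two.mp hP2
  have hfib : S.filter (fun pr => ({pr.1, pr.2} : Finset (Sym2 (Fin n))) = {f1, f2})
      = ({(f1, f2), (f2, f1)} : Finset (Sym2 (Fin n) × Sym2 (Fin n))) := by
    ext ⟨a, b⟩
    simp only [mem_filter, hS, mem_offDiag, mem_insert, mem_singleton, Prod.mk.injEq]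
    constructor
    · rintro ⟨⟨⟨ha, hb, hab⟩, hdisj⟩, heq⟩
      have ha' : a ∈ ({f1, f2} : Finset (Sym2 (Fin n))) := heq ▸ (by simp)
      have hb' : b ∈ ({f1, f2} : Finset (Sym2 (Fin n))) := heq ▸ (by simp)
      simp only [mem_insert, mem_singleton] at ha' hb'
      rcases ha' with rfl | rfl <;> rcases hb' with rfl | rfl
      · exact absurd rfl hab
      · exact Or.inl ⟨rfl, rfl⟩
      · exact Or.inr ⟨rfl, rfl⟩
      · exact absurd rfl hab
    · have hf1E : f1 ∈ G.edgeFinset := hPE (by simp)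
      have hf2E : f2 ∈ G.edgeFinset := hPE (by simp)
      have hd12 : ∀ x ∈ f1, x ∉ f2 := hPprop f1 (by simp) f2 (by simp) hf12
      have hd21 : ∀ x ∈ f2, x ∉ f1 := hPprop f2 (by simp) f1 (by simp) hf12.symm
      rintro (⟨rfl, rfl⟩ | ⟨rfl, rfl⟩)
      · exact ⟨⟨⟨hf1E, hf2E, hf12⟩, hd12⟩, rfl⟩
      · exact ⟨⟨⟨hf2E, hf1E, hf12.symm⟩, hd21⟩, by rw [Finset.pair_comm]⟩
  rw [hfib, card_insert_of_notMem (by simp [Prod.ext_iff, hf12]),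
    card_singleton]

open Classical in
lemma sum_kk_sq {n : ℕ} (G : SimpleGraph (Fin n)) [DecidableRel G.Adj] :
    ∑ s ∈ univ.powersetCard 3, (kk G s : ℤ) * (kk G s - 1)
    = (G.edgeFinset.card : ℤ) * (G.edgeFinset.card - 1)
      - 2 * ((G.edgeFinset.powersetCard 2).filter
        (fun P => ∀ e₁ ∈ P, ∀ e₂ ∈ P, e₁ ≠ e₂ → ∀ x : Fin n, x ∈ e₁ → x ∉ e₂)).card := by
  classical
  have h2 : ∀ s : Finset (Fin n), (G.edgeFinset.filter (fun ed => ∀ x ∈ ed, x ∈ s)).offDiag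
      = G.edgeFinset.offDiag.filter
        (fun pr : Sym2 (Fin n) × Sym2 (Fin n) => (∀ x ∈ pr.1, x ∈ s) ∧ (∀ x ∈ pr.2, x ∈ s)) := by
    intro s
    ext ⟨a, b⟩
    simp only [mem_offDiag, mem_filter]
    tauto
  have hN : ∑ s ∈ univ.powersetCard 3,
        ((G.edgeFinset.filter (fun ed => ∀ x ∈ ed, x ∈ s)).offDiag).card
      = (G.edgeFinset.offDiag.filter
          (fun pr : Sym2 (Fin n) × Sym2 (Fin n) => ∃ x, x ∈ pr.1 ∧ x ∈ pr.2)).card := by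
    have hswap : ∑ s ∈ univ.powersetCard 3,
          ((G.edgeFinset.filter (fun ed => ∀ x ∈ ed, x ∈ s)).offDiag).card
        = ∑ pr ∈ G.edgeFinset.offDiag,
            ((univ.powersetCard 3).filter
              (fun s : Finset (Fin n) => (∀ x ∈ pr.1, x ∈ s) ∧ (∀ x ∈ pr.2, x ∈ s))).card := by
      simp only [h2, card_filter]
      rw [Finset.sum_comm]
    rw [hswap, card_filter, Finset.sum_congr rfl (fun pr hpr => ?_)]
    obtain ⟨hp1, hp2, hpne⟩ := mem_offDiag.mp hpr
    by_cases hsh : ∃ x, x ∈ pr.1 ∧ x ∈ pr.2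
    · rw [if_pos hsh]
      exact pair_card_one G hp1 hp2 hpne hsh
    · rw [if_neg hsh]
      exact pair_card_zero G hp1 hp2 hsh
  have hsplit : (G.edgeFinset.offDiag.filter
        (fun pr : Sym2 (Fin n) × Sym2 (Fin n) => ∃ x, x ∈ pr.1 ∧ x ∈ pr.2)).card
      + (G.edgeFinset.offDiag.filter
        (fun pr : Sym2 (Fin n) × Sym2 (Fin n) => ∀ x ∈ pr.1, x ∉ pr.2)).card
      = G.edgeFinset.card * G.edgeFinset.card - G.edgeFinset.card := by
    rw [← Finset.offDiag_card]
    rw [show (G.edgeFinset.offDiag.filter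
        (fun pr : Sym2 (Fin n) × Sym2 (Fin n) => ∀ x ∈ pr.1, x ∉ pr.2))
      = (G.edgeFinset.offDiag.filter
        (fun pr : Sym2 (Fin n) × Sym2 (Fin n) => ¬ ∃ x, x ∈ pr.1 ∧ x ∈ pr.2)) from ?_]
    · exact Finset.card_filter_add_card_filter_not _
    · apply Finset.filter_congr
      intro pr _
      push_neg
      rfl
  have hpoint : ∀ s : Finset (Fin n), (kk G s : ℤ) * (kk G s - 1)
      = (((G.edgeFinset.filter (fun ed => ∀ x ∈ ed, x ∈ s)).offDiag).card : ℤ) := by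
    intro s
    rw [Finset.offDiag_card]
    have hle : kk G s ≤ kk G s * kk G s := by nlinarith
    have hk : ((G.edgeFinset.filter (fun ed => ∀ x ∈ ed, x ∈ s)).card) = kk G s := by
      rw [kk]; congr!
    rw [hk, Nat.cast_sub hle]
    push_cast
    ring
  have hle2 : G.edgeFinset.card ≤ G.edgeFinset.card * G.edgeFinset.card := by nlinarith
  calc ∑ s ∈ univ.powersetCard 3, (kk G s : ℤ) * (kk G s - 1)
      = ∑ s ∈ univ.powersetCard 3,
          ((((G.edgeFinset.filter (fun ed => ∀ x ∈ ed, x ∈ s)).offDiag).card : ℤ)) :=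
        Finset.sum_congr rfl (fun s _ => hpoint s)
    _ = ((∑ s ∈ univ.powersetCard 3,
          ((G.edgeFinset.filter (fun ed => ∀ x ∈ ed, x ∈ s)).offDiag).card : ℕ) : ℤ) := by
        push_cast; rfl
    _ = _ := by
        rw [hN]
        have := congrArg (Nat.cast : ℕ → ℤ) hsplit
        push_cast [Nat.cast_sub hle2] at this
        rw [two_q G] at this
        push_cast at this ⊢
        linarith

open Classical in
lemma kk_triple {n : ℕ} (G : SimpleGraph (Fin n)) {u v w : Fin n}
    (huv : u ≠ v) (huw : u ≠ w) (hvw : v ≠ w) :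
    kk G {u, v, w} = (if G.Adj u v then 1 else 0) + (if G.Adj u w then 1 else 0) +
      (if G.Adj v w then 1 else 0) := by
  classical
  have hset : G.edgeFinset.filter (fun ed => ∀ x ∈ ed, x ∈ ({u, v, w} : Finset (Fin n))) =
      ({s(u, v), s(u, w), s(v, w)} : Finset (Sym2 (Fin n))).filter (· ∈ G.edgeFinset) := by
    ext ed
    induction ed with
    | _ a b =>
      simp only [mem_filter, SimpleGraph.mem_edgeFinset, SimpleGraph.mem_edgeSet,
        Sym2.mem_iff, mem_insert, mem_singleton, forall_eq_or_imp, forall_eq]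
      constructor
      · rintro ⟨hadj, ha, hb⟩
        have hne : a ≠ b := hadj.ne
        refine ⟨?_, hadj⟩
        rcases ha with rfl | rfl | rfl <;> rcases hb with rfl | rfl | rfl <;>
          simp_all [Sym2.eq_iff] <;> tauto
      · rintro ⟨h, hadj⟩
        refine ⟨hadj, ?_, ?_⟩ <;> rcases h with h | h | h <;> rw [Sym2.eq_iff] at h <;> tauto
  have h1 : s(u, v) ≠ s(u, w) := by simp [Sym2.eq_iff]; tauto
  have h2 : s(u, v) ≠ s(v, w) := by simp [Sym2.eq_iff]; tauto
  have h3 : s(u, w) ≠ s(v, w) := by simp [Sym2.eq_iff]; tauto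
  rw [kk, hset, filter_insert, filter_insert, filter_singleton]
  simp only [SimpleGraph.mem_edgeFinset, SimpleGraph.mem_edgeSet]
  split_ifs <;> simp_all [card_insert_of_notMem]

open Classical in
lemma kk_le_three {n : ℕ} (G : SimpleGraph (Fin n)) [DecidableRel G.Adj]
    {s : Finset (Fin n)} (hs : s ∈ univ.powersetCard 3) : kk G s ≤ 3 := by
  obtain ⟨u, v, w, huv, huw, hvw, rfl⟩ := Finset.card_eq_three.mp (mem_powersetCard_univ.mp hs)
  rw [kk_triple G huv huw hvw]
  split_ifs <;> omega

open Classical in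
lemma clique_eq {n : ℕ} (G : SimpleGraph (Fin n)) [DecidableRel G.Adj] :
    (G.cliqueFinset 3).card
      = ((univ.powersetCard 3).filter (fun s => kk G s = 3)).card := by
  congr 1
  ext s
  simp only [SimpleGraph.mem_cliqueFinset_iff, mem_filter, mem_powersetCard_univ]
  constructor
  · intro h
    have hcard := h.card_eq
    obtain ⟨u, v, w, huv, huw, hvw, rfl⟩ := Finset.card_eq_three.mp hcard
    obtain ⟨hab, hac, hbc⟩ := SimpleGraph.is3Clique_triple_iff.mp h
    exact ⟨hcard, by rw [kk_triple G huv huw hvw, if_pos hab, if_pos hac, if_pos hbc]⟩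
  · rintro ⟨hcard, hk⟩
    obtain ⟨u, v, w, huv, huw, hvw, rfl⟩ := Finset.card_eq_three.mp hcard
    rw [kk_triple G huv huw hvw] at hk
    have hadj : G.Adj u v ∧ G.Adj u w ∧ G.Adj v w := by
      refine ⟨?_, ?_, ?_⟩ <;>
        by_contra hadj <;> rw [if_neg hadj] at hk <;> split_ifs at hk <;> omega
    exact SimpleGraph.is3Clique_triple_iff.mpr hadj

open Classical in
lemma fCount_eq {n : ℕ} (G : SimpleGraph (Fin n)) [DecidableRel G.Adj] :
    fCount G = ((univ.powersetCard 3).filter (fun s => Odd (kk G s))).card := by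
  unfold fCount
  congr 1
  ext s
  simp only [mem_filter]
  constructor
  · rintro ⟨hs, u, v, w, huv, huw, hvw, rfl, hfr⟩
    refine ⟨hs, ?_⟩
    rw [kk_triple G huv huw hvw]
    exact hfr
  · rintro ⟨hs, hodd⟩
    obtain ⟨u, v, w, huv, huw, hvw, rfl⟩ := Finset.card_eq_three.mp (mem_powersetCard_univ.mp hs)
    refine ⟨hs, u, v, w, huv, huw, hvw, rfl, ?_⟩
    rw [kk_triple G huv huw hvw] at hodd
    exact hodd

theorem fCount_formula_independent_edge_pairs
    (n : ℕ) (G : SimpleGraph (Fin n)) [DecidableRel G.Adj] (e p q : ℕ)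
    (he : e = G.edgeFinset.card) (hp : p = (G.cliqueFinset 3).card)
    (hq : q = ((G.edgeFinset.powersetCard 2).filter
      (fun P => ∀ e₁ ∈ P, ∀ e₂ ∈ P, e₁ ≠ e₂ → ∀ x : Fin n, x ∈ e₁ → x ∉ e₂)).card) :
    (fCount G : ℤ) = e * ((n : ℤ) - e - 1) + 4 * p + 2 * q := by
  classical
  have hf : (fCount G : ℤ)
      = ∑ s ∈ univ.powersetCard 3, (if Odd (kk G s) then (1 : ℤ) else 0) := by
    rw [fCount_eq G, card_filter]
    push_cast
    rfl
  have hpoint : ∀ s ∈ (univ.powersetCard 3 : Finset (Finset (Fin n))),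
      (if Odd (kk G s) then (1 : ℤ) else 0)
        = (kk G s : ℤ) - (kk G s : ℤ) * ((kk G s : ℤ) - 1)
          + 4 * (if kk G s = 3 then (1 : ℤ) else 0) := by
    intro s hs
    have h3 := kk_le_three G hs
    interval_cases h : (kk G s) <;> decide
  have hpsum : (p : ℤ)
      = ∑ s ∈ univ.powersetCard 3, (if kk G s = 3 then (1 : ℤ) else 0) := by
    rw [hp, clique_eq G, card_filter]
    push_cast
    rfl
  rw [hf, Finset.sum_congr rfl hpoint]
  rw [Finset.sum_add_distrib, Finset.sum_sub_distrib, ← Finset.mul_sum]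
  rw [sum_kk G, sum_kk_sq G, ← hpsum, ← he, ← hq]
  ring
end
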